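/- arXiv:1711.01340 — 5 statements merged into one kernel-verified Lean document; each statement's English description precedes it below -/
import Mathlib

section
/- Let X be a real Banach space with a Schauder basis (e_i, e_i^*) and let 𝒜 = ℝI⊕𝒦_diag(X). For T ∈ 𝒜 and i ∈ ℕ set λ_{T,i} := e_i^*(T e_i), and set λ_{T,∞} := lim_{i→∞} λ_{T,i} (this limit exists for every T ∈ 𝒜). For a subset L of ℕ ∪ {∞}, define 𝒜_L := { T ∈ 𝒜 : λ_{T,κ} = 0 for all κ ∈ L }. Then a subset ℐ of 𝒜 is a norm-closed linear subspace satisfying T∘S ∈ ℐ for every T ∈ 𝒜 and S ∈ ℐ (i.e., a closed ideal of 𝒜) if and only if ℐ = 𝒜_L for some subset L of ℕ ∪ {∞} that is closed in the one-point compactification topology (i.e., if L is infinite then ∞ ∈ L). -/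
open scoped BigOperators

/-- A Schauder basis of a real normed space. -/
structure RealSchauderBasis (X : Type*) [NormedAddCommGroup X] [NormedSpace ℝ X] where
  e : ℕ → X
  f : ℕ → X →L[ℝ] ℝ
  biorth : ∀ i j, f i (e j) = if i = j then 1 else 0
  expansion : ∀ x : X,
    Filter.Tendsto (fun n => ∑ i ∈ Finset.range n, f i x • e i) Filter.atTop (nhds x)

variable {X : Type*} [NormedAddCommGroup X] [NormedSpace ℝ X]

/-- A diagonal operator with respect to a Schauder basis. -/
def IsDiagonal (b : RealSchauderBasis X) (T : X →L[ℝ] X) : Prop :=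
  ∀ i j, i ≠ j → b.f j (T (b.e i)) = 0

/-- The subalgebra `𝒜 = ℝI ⊕ 𝒦_diag(X)` of all operators of the form `λ • Id + K` with `K`
compact and diagonal. -/
def scalarPlusDiagCompact (b : RealSchauderBasis X) : Set (X →L[ℝ] X) :=
  {T | ∃ (c : ℝ) (K : X →L[ℝ] X), IsCompactOperator ⇑K ∧ IsDiagonal b K ∧
    T = c • (1 : X →L[ℝ] X) + K}

/-- The diagonal entries of an operator, extended with the value at `∞` (encoded as `none`),
namely `λ_{T,i} = e_i^*(T e_i)` and `λ_{T,∞} = lim_i λ_{T,i}`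
(the limit exists whenever `T ∈ ℝI ⊕ 𝒦_diag(X)`). -/
noncomputable def diagEntry (b : RealSchauderBasis X) (T : X →L[ℝ] X) : Option ℕ → ℝ
  | some i => b.f i (T (b.e i))
  | none => Filter.limUnder Filter.atTop (fun i => b.f i (T (b.e i)))

/-!
Every `T ∈ 𝒜` acts diagonally, `T eᵢ = λ_{T,i} eᵢ`. The basis projections `Pₙ` are uniformly
bounded, hence converge to the identity uniformly on compact sets, so `Pₙ K → K` in norm for
compact `K`; for diagonal `K` this gives `|λ_{K,i}| ≤ 2C ‖K - Pᵢ K‖ → 0` (`C` the basis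
constant). Thus `λ_{T,∞}` is the scalar part of `T`, each `T ↦ λ_{T,κ}` is a character of `𝒜`,
and the bound `|λ_{T,κ}| ≤ 2C ‖T‖` makes it continuous on `𝒜`, which is closed as the sum of the
closed space of compact diagonal operators and the line `ℝ I`. So every `𝒜_L` is a closed ideal.

Conversely, let `L` be the set of common zeros of the diagonal entries of a closed ideal `ℐ`.
If `λ_{S,i} ≠ 0` for some `S ∈ ℐ`, then `eᵢ* ⊗ eᵢ = λ_{S,i}⁻¹ (eᵢ* ⊗ eᵢ) S ∈ ℐ`. Given
`T ∈ 𝒜_L`, take `S ∈ ℐ` with `λ_{S,∞} = λ_{T,∞}`. Then `R = T - S` is compact, so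
`R = lim R Pₙ`, and `R Pₙ = ∑_{i<n} λ_{R,i} eᵢ* ⊗ eᵢ ∈ ℐ` since `λ_{R,i} ≠ 0` forces `i ∉ L` or
`λ_{S,i} ≠ 0`. If `L` contains infinitely many `i`, then `λ_{S,∞} = lim λ_{S,i} = 0` for all
`S ∈ ℐ`, so `∞ ∈ L`.
-/

open Filter Topology

theorem ContinuousLinearMap.tendsto_comp_of_isCompactOperator {ι E F : Type*}
    [NormedAddCommGroup E] [NormedSpace ℝ E] [NormedAddCommGroup F] [NormedSpace ℝ F]
    {l : Filter ι} {P : ι → E →L[ℝ] E} {C : ℝ} (hC : ∀ n, ‖P n‖ ≤ C)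
    (hP : ∀ x, Tendsto (fun n => P n x) l (𝓝 x)) {K : F →L[ℝ] E} (hK : IsCompactOperator K) :
    Tendsto (fun n => (P n).comp K) l (𝓝 K) := by
  rw [Metric.tendsto_nhds]
  intro ε hε
  obtain ⟨M, hM, hKM⟩ := hK.image_closedBall_subset_compact 1
  set δ := ε / (|C| + 3) with hδ
  have hδ0 : 0 < δ := by positivity
  have hεδ : (|C| + 2) * δ < ε := by
    rw [hδ, mul_div_assoc', div_lt_iff₀ (by positivity)]
    nlinarith
  obtain ⟨t, -, ht, hMt⟩ := finite_cover_balls_of_compact hM hδ0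
  have hnet : ∀ᶠ n in l, ∀ z ∈ t, dist (P n z) z < δ :=
    (eventually_all_finite ht).2 fun z _ => Metric.tendsto_nhds.1 (hP z) δ hδ0
  filter_upwards [hnet] with n hn
  rw [dist_eq_norm]
  refine lt_of_le_of_lt (opNorm_le_of_unit_norm (by positivity) fun x hx => ?_) hεδ
  obtain ⟨z, hz, hKz⟩ : ∃ z ∈ t, ‖K x - z‖ < δ := by
    simpa [dist_eq_norm] using hMt (hKM ⟨x, by simp [hx], rfl⟩)
  have hPz : ‖P n z - z‖ < δ := by simpa [dist_eq_norm] using hn z hz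
  calc ‖((P n).comp K - K) x‖ = ‖P n (K x - z) + (P n z - z) + (z - K x)‖ := by
        congr 1
        simp only [comp_apply, sub_apply, map_sub]
        abel
    _ ≤ ‖P n (K x - z)‖ + ‖P n z - z‖ + ‖z - K x‖ := norm_add₃_le
    _ ≤ |C| * δ + δ + δ := by
        gcongr
        · exact ((P n).le_opNorm _).trans (mul_le_mul ((hC n).trans (le_abs_self C)) hKz.le
            (norm_nonneg _) (abs_nonneg C))
        · rw [norm_sub_rev]; exact hKz.le
    _ = (|C| + 2) * δ := by ring

namespace RealSchauderBasis

variable (b : RealSchauderBasis X)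

@[simp] lemma biorth_self (i : ℕ) : b.f i (b.e i) = 1 := by simp [b.biorth]

lemma biorth_of_ne {i j : ℕ} (h : i ≠ j) : b.f i (b.e j) = 0 := by simp [b.biorth, h]

lemma ext_elem {x y : X} (h : ∀ i, b.f i x = b.f i y) : x = y :=
  tendsto_nhds_unique (b.expansion x) (by simpa only [h] using b.expansion y)

def toSchauderBasis : SchauderBasis ℝ X where
  basis := b.e
  coord := b.f
  ortho i j := by simp [b.biorth, Pi.single_apply]
  expansion x := by
    rw [HasSum, SummationFilter.conditional_filter_eq_map_range, tendsto_map'_iff]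
    exact b.expansion x

@[simp] lemma toSchauderBasis_apply (i : ℕ) : b.toSchauderBasis i = b.e i := rfl

@[simp] lemma toSchauderBasis_coord (i : ℕ) : b.toSchauderBasis.coord i = b.f i := rfl

lemma ext_e {Y : Type*} [NormedAddCommGroup Y] [NormedSpace ℝ Y] {A B : X →L[ℝ] Y}
    (h : ∀ i, A (b.e i) = B (b.e i)) : A = B := by
  refine ContinuousLinearMap.ext_on (s := Set.range b.e) ?_ (by rintro _ ⟨i, rfl⟩; exact h i)
  refine dense_iff_closure_eq.2 (Set.eq_univ_of_forall fun x => ?_)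
  refine mem_closure_of_tendsto (b.toSchauderBasis.tendsto_proj x)
    (Eventually.of_forall fun n => ?_)
  rw [SchauderBasis.proj_apply]
  exact Submodule.sum_mem _ fun i _ => Submodule.smul_mem _ _ (Submodule.subset_span ⟨i, rfl⟩)

lemma diagEntry_some (T : X →L[ℝ] X) (i : ℕ) : diagEntry b T (some i) = b.f i (T (b.e i)) :=
  rfl

end RealSchauderBasis

namespace IsDiagonal

variable {b : RealSchauderBasis X}

lemma apply_e {T : X →L[ℝ] X} (hT : IsDiagonal b T) (i : ℕ) :
    T (b.e i) = diagEntry b T (some i) • b.e i := by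
  refine b.ext_elem fun j => ?_
  rcases eq_or_ne i j with rfl | hij
  · simp [RealSchauderBasis.diagEntry_some]
  · simp [hT i j hij, b.biorth_of_ne hij.symm]

lemma mul {T S : X →L[ℝ] X} (hT : IsDiagonal b T) (hS : IsDiagonal b S) :
    IsDiagonal b (T * S) := fun i j hij => by
  rw [mul_apply_eq_comp, hS.apply_e i, map_smul, map_smul, hT i j hij, smul_zero]

end IsDiagonal

namespace RealSchauderBasis

variable (b : RealSchauderBasis X)

lemma diagEntry_some_mul (T : X →L[ℝ] X) {S : X →L[ℝ] X} (hS : IsDiagonal b S) (i : ℕ) :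
    diagEntry b (T * S) (some i) = diagEntry b T (some i) * diagEntry b S (some i) := by
  rw [diagEntry_some, mul_apply_eq_comp, hS.apply_e i, map_smul, map_smul, smul_eq_mul, mul_comm]
  rfl

def diagonalSubalgebra : Subalgebra ℝ (X →L[ℝ] X) where
  carrier := {T | IsDiagonal b T}
  mul_mem' := IsDiagonal.mul
  add_mem' hT hS i j hij := by simp [hT i j hij, hS i j hij]
  algebraMap_mem' c i j hij := by simp [Algebra.algebraMap_eq_smul_one, b.biorth_of_ne hij.symm]

lemma isClosed_diagonalSubalgebra : IsClosed (diagonalSubalgebra b : Set (X →L[ℝ] X)) := by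
  change IsClosed {T : X →L[ℝ] X | ∀ i j, i ≠ j → b.f j (T (b.e i)) = 0}
  simp only [Set.ofPred_forall]
  exact isClosed_iInter fun i => isClosed_iInter fun j => isClosed_iInter fun _ =>
    isClosed_eq (by fun_prop) continuous_const

def diagCompactSubmodule : Submodule ℝ (X →L[ℝ] X) :=
  compactOperator (RingHom.id ℝ) X X ⊓ Subalgebra.toSubmodule (diagonalSubalgebra b)

lemma mem_diagCompactSubmodule {K : X →L[ℝ] X} :
    K ∈ diagCompactSubmodule b ↔ IsCompactOperator K ∧ IsDiagonal b K := Iff.rfl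

lemma mul_mem_diagCompactSubmodule {K K' : X →L[ℝ] X} (hK : K ∈ diagCompactSubmodule b)
    (hK' : K' ∈ diagCompactSubmodule b) : K * K' ∈ diagCompactSubmodule b :=
  ⟨hK.1.comp_clm K', hK.2.mul hK'.2⟩

def scalarPlusDiagCompactSubalgebra : Subalgebra ℝ (X →L[ℝ] X) where
  carrier := scalarPlusDiagCompact b
  mul_mem' := by
    rintro _ _ ⟨c, K, hK, hKd, rfl⟩ ⟨d, K', hK', hK'd, rfl⟩
    have hmem : c • K' + d • K + K * K' ∈ diagCompactSubmodule b :=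
      add_mem (add_mem (Submodule.smul_mem _ c ⟨hK', hK'd⟩) (Submodule.smul_mem _ d ⟨hK, hKd⟩))
        (b.mul_mem_diagCompactSubmodule ⟨hK, hKd⟩ ⟨hK', hK'd⟩)
    refine ⟨c * d, _, hmem.1, hmem.2, ?_⟩
    ext x
    simp only [add_apply, smul_apply, one_apply_eq_self, mul_apply_eq_comp, map_add, map_smul]
    module
  add_mem' := by
    rintro _ _ ⟨c, K, hK, hKd, rfl⟩ ⟨d, K', hK', hK'd, rfl⟩
    have hmem : K + K' ∈ diagCompactSubmodule b := add_mem ⟨hK, hKd⟩ ⟨hK', hK'd⟩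
    exact ⟨c + d, _, hmem.1, hmem.2, by rw [add_smul]; abel⟩
  algebraMap_mem' c :=
    ⟨c, 0, (diagCompactSubmodule b).zero_mem.1, (diagCompactSubmodule b).zero_mem.2,
      by simp [Algebra.algebraMap_eq_smul_one]⟩

lemma mem_scalarPlusDiagCompact_iff_mem_sup {T : X →L[ℝ] X} :
    T ∈ scalarPlusDiagCompact b ↔ T ∈ Submodule.span ℝ {1} ⊔ diagCompactSubmodule b := by
  simp only [Submodule.mem_sup, Submodule.mem_span_singleton, scalarPlusDiagCompact,
    Set.mem_ofPred_eq, mem_diagCompactSubmodule]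
  constructor
  · rintro ⟨c, K, hK, hKd, rfl⟩
    exact ⟨_, ⟨c, rfl⟩, K, ⟨hK, hKd⟩, rfl⟩
  · rintro ⟨_, ⟨c, rfl⟩, K, ⟨hK, hKd⟩, rfl⟩
    exact ⟨c, K, hK, hKd, rfl⟩

lemma isDiagonal_of_mem_scalarPlusDiagCompact {T : X →L[ℝ] X}
    (hT : T ∈ scalarPlusDiagCompact b) : IsDiagonal b T := by
  obtain ⟨c, K, -, hKd, rfl⟩ := hT
  exact add_mem (Subalgebra.smul_mem _ (one_mem (diagonalSubalgebra b)) c)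
    (show K ∈ diagonalSubalgebra b from hKd)

def coordProj (i : ℕ) : X →L[ℝ] X := (b.f i).smulRight (b.e i)

@[simp] lemma coordProj_apply (i : ℕ) (x : X) : b.coordProj i x = b.f i x • b.e i := rfl

lemma coordProj_mem_scalarPlusDiagCompact (i : ℕ) :
    b.coordProj i ∈ scalarPlusDiagCompact b := by
  refine ⟨0, b.coordProj i, ?_, fun j k hjk => ?_, by simp⟩
  · exact (isCompactOperator_of_locallyCompactSpace_dom (b.f i)).clm_comp
      (ContinuousLinearMap.toSpanSingleton ℝ (b.e i))
  · rcases eq_or_ne i j with rfl | hij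
    · simp [b.biorth_of_ne hjk.symm]
    · simp [b.biorth_of_ne hij]

lemma coordProj_mul {S : X →L[ℝ] X} (hS : IsDiagonal b S) (i : ℕ) :
    b.coordProj i * S = diagEntry b S (some i) • b.coordProj i := by
  refine b.ext_e fun j => ?_
  rw [mul_apply_eq_comp, hS.apply_e j, smul_apply]
  rcases eq_or_ne i j with rfl | hij
  · simp
  · simp [b.biorth_of_ne hij]

lemma mul_proj_eq_sum {R : X →L[ℝ] X} (hR : IsDiagonal b R) (n : ℕ) :
    R * b.toSchauderBasis.proj n =
      ∑ i ∈ Finset.range n, diagEntry b R (some i) • b.coordProj i := by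
  refine b.ext_e fun j => ?_
  rw [mul_apply_eq_comp, ← toSchauderBasis_apply, SchauderBasis.proj_apply_basis_mem, sum_apply]
  split_ifs with hj
  · rw [Finset.sum_eq_single j]
    · simp [hR.apply_e j]
    · intro i _ hij; simp [b.biorth_of_ne hij]
    · intro h; exact absurd (Finset.mem_range.2 hj) h
  · refine (map_zero R).trans (Finset.sum_eq_zero fun i hi => ?_).symm
    simp [b.biorth_of_ne (show i ≠ j by rintro rfl; exact hj (Finset.mem_range.1 hi))]

lemma proj_mul_comm {R : X →L[ℝ] X} (hR : IsDiagonal b R) (n : ℕ) :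
    b.toSchauderBasis.proj n * R = R * b.toSchauderBasis.proj n := by
  refine b.ext_e fun j => ?_
  simp only [mul_apply_eq_comp, ← toSchauderBasis_apply, SchauderBasis.proj_apply_basis_mem]
  rw [toSchauderBasis_apply, hR.apply_e j, map_smul, ← toSchauderBasis_apply,
    SchauderBasis.proj_apply_basis_mem]
  split_ifs <;> simp [hR.apply_e j]

variable {b}

lemma coordProj_mem_of_diagEntry_ne_zero {I : Submodule ℝ (X →L[ℝ] X)}
    (hIA : (I : Set (X →L[ℝ] X)) ⊆ scalarPlusDiagCompact b)
    (hmul : ∀ T ∈ scalarPlusDiagCompact b, ∀ S ∈ I, T * S ∈ I) {S : X →L[ℝ] X} (hS : S ∈ I)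
    {i : ℕ} (hSi : diagEntry b S (some i) ≠ 0) : b.coordProj i ∈ I := by
  have h := I.smul_mem (diagEntry b S (some i))⁻¹
    (hmul _ (b.coordProj_mem_scalarPlusDiagCompact i) S hS)
  rwa [b.coordProj_mul (b.isDiagonal_of_mem_scalarPlusDiagCompact (hIA hS)), smul_smul,
    inv_mul_cancel₀ hSi, one_smul] at h

variable (b) [CompleteSpace X]

lemma isClosed_scalarPlusDiagCompact : IsClosed (scalarPlusDiagCompact b) := by
  have hK : IsClosed (diagCompactSubmodule b : Set (X →L[ℝ] X)) :=
    isClosed_setOfPred_isCompactOperator.inter (isClosed_diagonalSubalgebra b)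
  convert Submodule.isClosed_sup_finiteDimensional _ (Submodule.span ℝ {1}) hK using 1
  ext T
  rw [SetLike.mem_coe, sup_comm, ← mem_scalarPlusDiagCompact_iff_mem_sup]

lemma tendsto_proj_mul {K : X →L[ℝ] X} (hK : IsCompactOperator K) :
    Tendsto (fun n => b.toSchauderBasis.proj n * K) atTop (𝓝 K) :=
  have ⟨_, hC⟩ := b.toSchauderBasis.exists_norm_proj_le
  ContinuousLinearMap.tendsto_comp_of_isCompactOperator hC b.toSchauderBasis.tendsto_proj hK

lemma exists_abs_diagEntry_some_le :
    ∃ D, ∀ (T : X →L[ℝ] X) i, |diagEntry b T (some i)| ≤ D * ‖T‖ := by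
  obtain ⟨C, hC⟩ := b.toSchauderBasis.exists_norm_proj_le
  refine ⟨2 * C, fun T i => ?_⟩
  have hP : b.coordProj i = b.toSchauderBasis.proj (i + 1) - b.toSchauderBasis.proj i := by
    ext x; simp [Finset.sum_range_succ]
  have hnorm : ‖b.f i‖ * ‖b.e i‖ ≤ 2 * C := by
    rw [← ContinuousLinearMap.norm_smulRight_apply, ← coordProj, hP, two_mul]
    exact (norm_sub_le _ _).trans (add_le_add (hC _) (hC _))
  calc |diagEntry b T (some i)| ≤ ‖b.f i‖ * (‖T‖ * ‖b.e i‖) :=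
        ((b.f i).le_opNorm _).trans (by gcongr; exact T.le_opNorm _)
    _ = ‖b.f i‖ * ‖b.e i‖ * ‖T‖ := by ring
    _ ≤ 2 * C * ‖T‖ := by gcongr

lemma tendsto_diagEntry_some_of_mem_diagCompactSubmodule {K : X →L[ℝ] X}
    (hK : K ∈ diagCompactSubmodule b) :
    Tendsto (fun i => diagEntry b K (some i)) atTop (𝓝 0) := by
  obtain ⟨D, hD⟩ := b.exists_abs_diagEntry_some_le
  have hlim : Tendsto (fun n => D * ‖K - b.toSchauderBasis.proj n * K‖) atTop (𝓝 0) := by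
    simpa [norm_sub_rev] using
      (tendsto_iff_norm_sub_tendsto_zero.1 (b.tendsto_proj_mul hK.1)).const_mul D
  refine squeeze_zero_norm (fun i => ?_) hlim
  have hproj : b.toSchauderBasis.proj i (b.e i) = 0 := by
    simpa using b.toSchauderBasis.proj_apply_basis_mem i i
  have : diagEntry b (K - b.toSchauderBasis.proj i * K) (some i) = diagEntry b K (some i) := by
    rw [diagEntry_some, sub_apply, mul_apply_eq_comp, hK.2.apply_e i, map_smul, hproj, smul_zero,
      sub_zero, map_smul, biorth_self, smul_eq_mul, mul_one]
  rw [← this, Real.norm_eq_abs]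
  exact hD _ i

lemma tendsto_diagEntry_smul_one_add {c : ℝ} {K : X →L[ℝ] X} (hK : K ∈ diagCompactSubmodule b) :
    Tendsto (fun i => diagEntry b (c • 1 + K) (some i)) atTop (𝓝 c) := by
  have h := (b.tendsto_diagEntry_some_of_mem_diagCompactSubmodule hK).const_add c
  rw [add_zero] at h
  refine h.congr fun i => ?_
  simp [diagEntry_some]

lemma diagEntry_none_smul_one_add {c : ℝ} {K : X →L[ℝ] X} (hK : K ∈ diagCompactSubmodule b) :
    diagEntry b (c • 1 + K) none = c :=
  (b.tendsto_diagEntry_smul_one_add hK).limUnder_eq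

lemma tendsto_diagEntry {T : X →L[ℝ] X} (hT : T ∈ scalarPlusDiagCompact b) :
    Tendsto (fun i => diagEntry b T (some i)) atTop (𝓝 (diagEntry b T none)) := by
  obtain ⟨c, K, hK, hKd, rfl⟩ := hT
  rw [b.diagEntry_none_smul_one_add ⟨hK, hKd⟩]
  exact b.tendsto_diagEntry_smul_one_add ⟨hK, hKd⟩

lemma isCompactOperator_of_diagEntry_none_eq_zero {T : X →L[ℝ] X}
    (hT : T ∈ scalarPlusDiagCompact b) (h : diagEntry b T none = 0) : IsCompactOperator T := by
  obtain ⟨c, K, hK, hKd, rfl⟩ := hT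
  rw [b.diagEntry_none_smul_one_add ⟨hK, hKd⟩] at h
  simpa [h] using hK

lemma diagEntry_eq_of_forall_some {T S U : X →L[ℝ] X} (hT : T ∈ scalarPlusDiagCompact b)
    (hS : S ∈ scalarPlusDiagCompact b) {F : ℝ → ℝ → ℝ} (hF : Continuous (Function.uncurry F))
    (h : ∀ i, diagEntry b U (some i) = F (diagEntry b T (some i)) (diagEntry b S (some i)))
    (κ : Option ℕ) : diagEntry b U κ = F (diagEntry b T κ) (diagEntry b S κ) := by
  cases κ with
  | some i => exact h i
  | none =>
    exact (((hF.tendsto _).comp ((b.tendsto_diagEntry hT).prodMk_nhds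
      (b.tendsto_diagEntry hS))).congr fun i => (h i).symm).limUnder_eq

variable {b}

lemma diagEntry_add {T S : X →L[ℝ] X} (hT : T ∈ scalarPlusDiagCompact b)
    (hS : S ∈ scalarPlusDiagCompact b) (κ : Option ℕ) :
    diagEntry b (T + S) κ = diagEntry b T κ + diagEntry b S κ :=
  b.diagEntry_eq_of_forall_some hT hS continuous_add (fun i => by simp [diagEntry_some]) κ

lemma diagEntry_sub {T S : X →L[ℝ] X} (hT : T ∈ scalarPlusDiagCompact b)
    (hS : S ∈ scalarPlusDiagCompact b) (κ : Option ℕ) :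
    diagEntry b (T - S) κ = diagEntry b T κ - diagEntry b S κ :=
  b.diagEntry_eq_of_forall_some hT hS continuous_sub (fun i => by simp [diagEntry_some]) κ

lemma diagEntry_mul {T S : X →L[ℝ] X} (hT : T ∈ scalarPlusDiagCompact b)
    (hS : S ∈ scalarPlusDiagCompact b) (κ : Option ℕ) :
    diagEntry b (T * S) κ = diagEntry b T κ * diagEntry b S κ :=
  b.diagEntry_eq_of_forall_some hT hS continuous_mul
    (b.diagEntry_some_mul T (b.isDiagonal_of_mem_scalarPlusDiagCompact hS)) κ

lemma diagEntry_smul (c : ℝ) {T : X →L[ℝ] X} (hT : T ∈ scalarPlusDiagCompact b)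
    (κ : Option ℕ) : diagEntry b (c • T) κ = c * diagEntry b T κ :=
  b.diagEntry_eq_of_forall_some (F := fun x _ => c * x) hT hT (by fun_prop)
    (fun i => by simp [diagEntry_some]) κ

lemma diagEntry_zero (κ : Option ℕ) : diagEntry b (0 : X →L[ℝ] X) κ = 0 := by
  simpa using diagEntry_smul 0 (zero_mem (scalarPlusDiagCompactSubalgebra b)) κ

variable (b)

lemma exists_abs_diagEntry_le :
    ∃ D, ∀ T ∈ scalarPlusDiagCompact b, ∀ κ, |diagEntry b T κ| ≤ D * ‖T‖ := by
  obtain ⟨D, hD⟩ := b.exists_abs_diagEntry_some_le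
  refine ⟨D, fun T hT κ => ?_⟩
  cases κ with
  | some i => exact hD T i
  | none => exact le_of_tendsto (b.tendsto_diagEntry hT).abs (Eventually.of_forall (hD T))

lemma continuousOn_diagEntry (κ : Option ℕ) :
    ContinuousOn (fun T => diagEntry b T κ) (scalarPlusDiagCompact b) := by
  obtain ⟨D, hD⟩ := b.exists_abs_diagEntry_le
  refine (LipschitzOnWith.of_dist_le_mul fun T hT S hS => ?_ :
    LipschitzOnWith D.toNNReal _ _).continuousOn
  rw [Real.dist_eq, dist_eq_norm, ← diagEntry_sub hT hS]
  exact (hD _ ((scalarPlusDiagCompactSubalgebra b).sub_mem hT hS) κ).trans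
    (by gcongr; exact D.le_coe_toNNReal)

/-- The ideal `𝒜_L`. -/
def vanishingSubmodule (L : Set (Option ℕ)) : Submodule ℝ (X →L[ℝ] X) where
  carrier := {T | T ∈ scalarPlusDiagCompact b ∧ ∀ κ ∈ L, diagEntry b T κ = 0}
  add_mem' := fun ⟨hT, hTL⟩ ⟨hS, hSL⟩ => ⟨(scalarPlusDiagCompactSubalgebra b).add_mem hT hS,
    fun κ hκ => by rw [diagEntry_add hT hS, hTL κ hκ, hSL κ hκ, add_zero]⟩
  zero_mem' := ⟨(scalarPlusDiagCompactSubalgebra b).zero_mem, fun κ _ => diagEntry_zero κ⟩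
  smul_mem' c _ := fun ⟨hT, hTL⟩ => ⟨(scalarPlusDiagCompactSubalgebra b).smul_mem hT c,
    fun κ hκ => by rw [diagEntry_smul c hT, hTL κ hκ, mul_zero]⟩

lemma mul_mem_vanishingSubmodule {L : Set (Option ℕ)} {T S : X →L[ℝ] X}
    (hT : T ∈ scalarPlusDiagCompact b) (hS : S ∈ b.vanishingSubmodule L) :
    T * S ∈ b.vanishingSubmodule L :=
  ⟨(scalarPlusDiagCompactSubalgebra b).mul_mem hT hS.1,
    fun κ hκ => by rw [diagEntry_mul hT hS.1, hS.2 κ hκ, mul_zero]⟩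

lemma isClosed_vanishingSubmodule (L : Set (Option ℕ)) :
    IsClosed (b.vanishingSubmodule L : Set (X →L[ℝ] X)) := by
  have hA := b.isClosed_scalarPlusDiagCompact
  have : (b.vanishingSubmodule L : Set (X →L[ℝ] X)) = scalarPlusDiagCompact b ∩
      ⋂ κ ∈ L, scalarPlusDiagCompact b ∩ (fun T => diagEntry b T κ) ⁻¹' {0} := by
    ext T
    simp only [SetLike.mem_coe, Set.mem_inter_iff, Set.mem_iInter, Set.mem_preimage,
      Set.mem_singleton_iff]
    exact ⟨fun ⟨hT, hTL⟩ => ⟨hT, fun κ hκ => ⟨hT, hTL κ hκ⟩⟩,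
      fun ⟨hT, hTL⟩ => ⟨hT, fun κ hκ => (hTL κ hκ).2⟩⟩
  rw [this]
  exact hA.inter (isClosed_biInter fun κ _ =>
    (b.continuousOn_diagEntry κ).preimage_isClosed_of_isClosed hA isClosed_singleton)

def commonDiagZeros (I : Set (X →L[ℝ] X)) : Set (Option ℕ) :=
  {κ | ∀ S ∈ I, diagEntry b S κ = 0}

lemma none_mem_commonDiagZeros {I : Set (X →L[ℝ] X)} (hIA : I ⊆ scalarPlusDiagCompact b)
    (hinf : {i : ℕ | some i ∈ b.commonDiagZeros I}.Infinite) : none ∈ b.commonDiagZeros I := by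
  intro S hS
  have hfreq : ∃ᶠ i in atTop, diagEntry b S (some i) = 0 := by
    refine Nat.frequently_atTop_iff_infinite.2 (hinf.mono fun i hi => ?_)
    exact hi S hS
  exact tendsto_nhds_unique_of_frequently_eq (b.tendsto_diagEntry (hIA hS)) tendsto_const_nhds
    hfreq

variable {b} {I : Submodule ℝ (X →L[ℝ] X)}

lemma mem_of_diagEntry_none_eq_zero (hIA : (I : Set (X →L[ℝ] X)) ⊆ scalarPlusDiagCompact b)
    (hmul : ∀ T ∈ scalarPlusDiagCompact b, ∀ S ∈ I, T * S ∈ I)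
    (hclosed : IsClosed (I : Set (X →L[ℝ] X))) {R : X →L[ℝ] X}
    (hR : R ∈ scalarPlusDiagCompact b) (hR0 : diagEntry b R none = 0)
    (hRI : ∀ i, diagEntry b R (some i) ≠ 0 → ∃ S ∈ I, diagEntry b S (some i) ≠ 0) : R ∈ I := by
  have hRd := b.isDiagonal_of_mem_scalarPlusDiagCompact hR
  have hsum : ∀ n, R * b.toSchauderBasis.proj n ∈ I := fun n => by
    rw [b.mul_proj_eq_sum hRd]
    refine I.sum_mem fun i _ => ?_
    by_cases hi : diagEntry b R (some i) = 0
    · simp [hi]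
    · obtain ⟨S, hS, hSi⟩ := hRI i hi
      exact I.smul_mem _ (coordProj_mem_of_diagEntry_ne_zero hIA hmul hS hSi)
  have hlim : Tendsto (fun n => R * b.toSchauderBasis.proj n) atTop (𝓝 R) := by
    simpa only [b.proj_mul_comm hRd] using
      b.tendsto_proj_mul (b.isCompactOperator_of_diagEntry_none_eq_zero hR hR0)
  exact hclosed.mem_of_tendsto hlim (Eventually.of_forall hsum)

lemma eq_vanishingSubmodule_commonDiagZeros
    (hIA : (I : Set (X →L[ℝ] X)) ⊆ scalarPlusDiagCompact b)
    (hmul : ∀ T ∈ scalarPlusDiagCompact b, ∀ S ∈ I, T * S ∈ I)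
    (hclosed : IsClosed (I : Set (X →L[ℝ] X))) :
    I = b.vanishingSubmodule (b.commonDiagZeros I) := by
  refine le_antisymm (fun T hT => ⟨hIA hT, fun κ hκ => hκ T hT⟩) fun T ⟨hTA, hTL⟩ => ?_
  obtain ⟨S, hSI, hS⟩ : ∃ S ∈ I, diagEntry b S none = diagEntry b T none := by
    by_cases h : none ∈ b.commonDiagZeros I
    · exact ⟨0, I.zero_mem, by rw [diagEntry_zero, hTL none h]⟩
    · obtain ⟨U, hUI, hU⟩ : ∃ U ∈ I, diagEntry b U none ≠ 0 := by
        simpa [commonDiagZeros] using h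
      exact ⟨(diagEntry b T none / diagEntry b U none) • U, I.smul_mem _ hUI,
        by rw [diagEntry_smul _ (hIA hUI), div_mul_cancel₀ _ hU]⟩
  have hSA := hIA hSI
  have hR : T - S ∈ I := by
    refine mem_of_diagEntry_none_eq_zero hIA hmul hclosed
      ((scalarPlusDiagCompactSubalgebra b).sub_mem hTA hSA)
      (by rw [diagEntry_sub hTA hSA, hS, sub_self]) fun i hi => ?_
    rw [diagEntry_sub hTA hSA] at hi
    by_cases hSi : diagEntry b S (some i) = 0
    · by_contra! h
      exact hi (by rw [hTL (some i) h, hSi, sub_zero])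
    · exact ⟨S, hSI, hSi⟩
  simpa using I.add_mem hR hSI

end RealSchauderBasis

/-- **Theorem.** The closed ideals of `𝒜 = ℝI ⊕ 𝒦_diag(X)` are precisely the sets
`𝒜_L = {T ∈ 𝒜 : λ_{T,κ} = 0 for all κ ∈ L}` where `L` ranges over the subsets of
`ℕ ∪ {∞}` (encoded as `Option ℕ`, with `none` playing the role of `∞`) that are closed in
the one-point compactification, i.e. those containing `∞` whenever they are infinite. -/
theorem closed_ideals_of_scalar_plus_diag_compact
    (X : Type) [NormedAddCommGroup X] [NormedSpace ℝ X] [CompleteSpace X]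
    (b : RealSchauderBasis X) (I : Set (X →L[ℝ] X)) :
    (I ⊆ scalarPlusDiagCompact b ∧
      (0 : X →L[ℝ] X) ∈ I ∧
      (∀ S ∈ I, ∀ T ∈ I, S + T ∈ I) ∧
      (∀ (c : ℝ), ∀ S ∈ I, c • S ∈ I) ∧
      IsClosed I ∧
      (∀ T ∈ scalarPlusDiagCompact b, ∀ S ∈ I, T * S ∈ I)) ↔
    ∃ L : Set (Option ℕ),
      ({i : ℕ | some i ∈ L}.Infinite → none ∈ L) ∧
      I = {T | T ∈ scalarPlusDiagCompact b ∧ ∀ κ ∈ L, diagEntry b T κ = 0} := by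
  constructor
  · rintro ⟨hIA, h0, hadd, hsmul, hclosed, hmul⟩
    obtain ⟨J, rfl⟩ : ∃ J : Submodule ℝ (X →L[ℝ] X), (J : Set (X →L[ℝ] X)) = I :=
      ⟨{ carrier := I
         add_mem' := fun hS hT => hadd _ hS _ hT
         zero_mem' := h0
         smul_mem' := hsmul }, rfl⟩
    exact ⟨b.commonDiagZeros J, b.none_mem_commonDiagZeros hIA, congrArg SetLike.coe
      (RealSchauderBasis.eq_vanishingSubmodule_commonDiagZeros hIA hmul hclosed)⟩
  · rintro ⟨L, -, rfl⟩
    exact ⟨fun T hT => hT.1, (b.vanishingSubmodule L).zero_mem,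
      fun S hS T hT => (b.vanishingSubmodule L).add_mem hS hT,
      fun c S hS => (b.vanishingSubmodule L).smul_mem c hS, b.isClosed_vanishingSubmodule L,
      fun T hT S hS => b.mul_mem_vanishingSubmodule hT hS⟩
end

section
/- Let (x_i) be a normalized 1-unconditional sequence in a real Banach space X. Then for all finitely supported λ, μ : ℕ → ℝ, J*((λ_i·μ_i)_{i≥1}) ≤ 2·J*(λ)·J*(μ). -/
open scoped BigOperators

open Finset

variable {X : Type*} [NormedAddCommGroup X] [NormedSpace ℝ X]

/-- A sequence is 1-unconditional if changing signs of coefficients does not change the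
norm of finite linear combinations. -/
def OneUnconditional (x : ℕ → X) : Prop :=
  ∀ (s : Finset ℕ) (a ε : ℕ → ℝ), (∀ i, ε i = 1 ∨ ε i = -1) →
    ‖∑ i ∈ s, (ε i * a i) • x i‖ = ‖∑ i ∈ s, a i • x i‖

/-- The quantities whose supremum defines the jamesification norm `J(a)`:
`‖∑_{n<r} (∑_{i ∈ [k n, m n]} a i) • x (k n)‖` over all systems
`k 0 ≤ m 0 < k 1 ≤ m 1 < ⋯`. -/
def jamesSet (x : ℕ → X) (a : ℕ → ℝ) : Set ℝ :=
  {v | ∃ (r : ℕ) (k m : ℕ → ℕ), (∀ n, k n ≤ m n) ∧ (∀ n, m n < k (n + 1)) ∧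
    v = ‖∑ n ∈ Finset.range r, (∑ i ∈ Finset.Icc (k n) (m n), a i) • x (k n)‖}

/-- The jamesification norm of a finitely supported sequence of coefficients. -/
noncomputable def jamesNorm (x : ℕ → X) (a : ℕ → ℝ) : ℝ :=
  sSup (jamesSet x a)

/-- The dual jamesification norm:
`J*(λ) = sup { |∑ i, λ i * a i| : a finitely supported, J(a) ≤ 1 }`. -/
noncomputable def jamesDualNorm (x : ℕ → X) (l : ℕ → ℝ) : ℝ :=
  sSup {v | ∃ a : ℕ → ℝ, (Function.support a).Finite ∧ jamesNorm x a ≤ 1 ∧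
    v = |∑ᶠ i, l i * a i|}

/-- The quantities whose supremum defines the variation norm `V(a)`:
`‖∑_{n<r} (a (k n) - a (m n)) • x (k n)‖` over all systems
`k 0 < m 0 ≤ k 1 < m 1 ≤ ⋯`. -/
def varSet (x : ℕ → X) (a : ℕ → ℝ) : Set ℝ :=
  {v | ∃ (r : ℕ) (k m : ℕ → ℕ), (∀ n, k n < m n) ∧ (∀ n, m n ≤ k (n + 1)) ∧
    v = ‖∑ n ∈ Finset.range r, (a (k n) - a (m n)) • x (k n)‖}

/-- The variation norm of a finitely supported sequence of coefficients. -/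
noncomputable def varNorm (x : ℕ → X) (a : ℕ → ℝ) : ℝ :=
  sSup (varSet x a)

/-! ### Auxiliary material -/

/-- The step function associated with a block configuration and block values `d`. -/
noncomputable def stepFn (r : ℕ) (k m : ℕ → ℕ) (d : ℕ → ℝ) : ℕ → ℝ := fun i =>
  ∑ n ∈ (Finset.range r).filter (fun n => k n ≤ i ∧ i ≤ m n), d n

lemma Icc_inter_Icc_nat (a b c e : ℕ) :
    Finset.Icc a b ∩ Finset.Icc c e = Finset.Icc (max a c) (min b e) := by
  ext i
  simp only [Finset.mem_inter, Finset.mem_Icc]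
  omega

lemma zero_mem_jamesSet (x : ℕ → X) (a : ℕ → ℝ) : (0 : ℝ) ∈ jamesSet x a :=
  ⟨0, id, id, fun _ => le_rfl, fun n => Nat.lt_succ_self n, by simp⟩

lemma config_m_lt_k {k m : ℕ → ℕ} (hk : ∀ n, k n ≤ m n) (hm : ∀ n, m n < k (n + 1)) :
    ∀ ⦃n n' : ℕ⦄, n < n' → m n < k n' := by
  have hmono : Monotone k := monotone_nat_of_le_succ fun n => ((hk n).trans (hm n).le)
  intro n n' h
  exact lt_of_lt_of_le (hm n) (hmono h)

lemma config_strictMono {k m : ℕ → ℕ} (hk : ∀ n, k n ≤ m n) (hm : ∀ n, m n < k (n + 1)) :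
    ∀ ⦃n n' : ℕ⦄, n < n' → k n < k n' := fun n n' h =>
  lt_of_le_of_lt (hk n) (config_m_lt_k hk hm h)

/-- Two blocks of a configuration containing a common point coincide. -/
lemma block_unique {k m : ℕ → ℕ} (hk : ∀ n, k n ≤ m n) (hm : ∀ n, m n < k (n + 1))
    {n n' j : ℕ} (h1 : k n ≤ j ∧ j ≤ m n) (h2 : k n' ≤ j ∧ j ≤ m n') : n = n' := by
  rcases lt_trichotomy n n' with h | h | h
  · exact absurd (config_m_lt_k hk hm h) (not_lt.2 (h2.1.trans h1.2))
  · exact h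
  · exact absurd (config_m_lt_k hk hm h) (not_lt.2 (h1.1.trans h2.2))

lemma jamesSet_bddAbove (x : ℕ → X) (hnorm : ∀ i, ‖x i‖ = 1) (a : ℕ → ℝ)
    (ha : (Function.support a).Finite) : BddAbove (jamesSet x a) := by
  classical
  refine ⟨∑ i ∈ ha.toFinset, |a i|, ?_⟩
  rintro v ⟨r, k, m, hk, hm, rfl⟩
  have hdisj : (↑(Finset.range r) : Set ℕ).PairwiseDisjoint
      (fun n => Finset.Icc (k n) (m n) ∩ ha.toFinset) := by
    intro n _ n' _ hne
    refine Finset.disjoint_left.2 fun i hi hi' => hne ?_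
    rw [Finset.mem_inter, Finset.mem_Icc] at hi hi'
    exact block_unique hk hm hi.1 hi'.1
  calc ‖∑ n ∈ Finset.range r, (∑ i ∈ Finset.Icc (k n) (m n), a i) • x (k n)‖
      ≤ ∑ n ∈ Finset.range r, ‖(∑ i ∈ Finset.Icc (k n) (m n), a i) • x (k n)‖ :=
        norm_sum_le _ _
    _ = ∑ n ∈ Finset.range r, |∑ i ∈ Finset.Icc (k n) (m n), a i| := by
        simp [norm_smul, hnorm]
    _ ≤ ∑ n ∈ Finset.range r, ∑ i ∈ Finset.Icc (k n) (m n) ∩ ha.toFinset, |a i| := by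
        refine Finset.sum_le_sum fun n _ => ?_
        refine (Finset.abs_sum_le_sum_abs _ _).trans (le_of_eq ?_)
        refine (Finset.sum_subset Finset.inter_subset_left fun i hi hni => ?_).symm
        have : a i = 0 := by
          by_contra h
          exact hni (Finset.mem_inter.2 ⟨hi, ha.mem_toFinset.2 h⟩)
        simp [this]
    _ = ∑ i ∈ (Finset.range r).biUnion (fun n => Finset.Icc (k n) (m n) ∩ ha.toFinset),
          |a i| := (Finset.sum_biUnion hdisj).symm
    _ ≤ ∑ i ∈ ha.toFinset, |a i| := by
        refine Finset.sum_le_sum_of_subset_of_nonneg ?_ fun i _ _ => abs_nonneg _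
        exact Finset.biUnion_subset.2 fun n _ => Finset.inter_subset_right

lemma jamesNorm_nonneg (x : ℕ → X) (hnorm : ∀ i, ‖x i‖ = 1) (a : ℕ → ℝ)
    (ha : (Function.support a).Finite) : 0 ≤ jamesNorm x a :=
  le_csSup (jamesSet_bddAbove x hnorm a ha) (zero_mem_jamesSet x a)

lemma abs_le_jamesNorm (x : ℕ → X) (hnorm : ∀ i, ‖x i‖ = 1) (a : ℕ → ℝ)
    (ha : (Function.support a).Finite) (i : ℕ) : |a i| ≤ jamesNorm x a := by
  refine le_csSup (jamesSet_bddAbove x hnorm a ha) ?_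
  refine ⟨1, fun n => i + n, fun n => i + n, fun _ => le_rfl, fun n => Nat.add_lt_add_left n.lt_succ_self i, ?_⟩
  simp [norm_smul, hnorm i]

lemma dualSet_bddAbove (x : ℕ → X) (hnorm : ∀ i, ‖x i‖ = 1) (l : ℕ → ℝ)
    (hl : (Function.support l).Finite) :
    BddAbove {v | ∃ a : ℕ → ℝ, (Function.support a).Finite ∧ jamesNorm x a ≤ 1 ∧
      v = |∑ᶠ i, l i * a i|} := by
  classical
  refine ⟨∑ i ∈ hl.toFinset, |l i|, ?_⟩
  rintro v ⟨a, ha, hJ, rfl⟩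
  have h1 : ∑ᶠ i, l i * a i = ∑ i ∈ hl.toFinset, l i * a i := by
    refine finsum_eq_sum_of_support_subset _ fun i hi => ?_
    have : l i ≠ 0 := fun h => by simp [h] at hi
    exact hl.mem_toFinset.2 this
  rw [h1]
  refine (Finset.abs_sum_le_sum_abs _ _).trans (Finset.sum_le_sum fun i _ => ?_)
  rw [abs_mul]
  refine mul_le_of_le_one_right (abs_nonneg _) ?_
  exact (abs_le_jamesNorm x hnorm a ha i).trans hJ

lemma zero_mem_dualSet (x : ℕ → X) (l : ℕ → ℝ) :
    (0 : ℝ) ∈ {v | ∃ a : ℕ → ℝ, (Function.support a).Finite ∧ jamesNorm x a ≤ 1 ∧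
      v = |∑ᶠ i, l i * a i|} := by
  refine ⟨fun _ => 0, by simp, ?_, by simp⟩
  refine csSup_le ⟨0, zero_mem_jamesSet x _⟩ ?_
  rintro v ⟨r, k, m, _, _, rfl⟩
  simp

lemma jamesDualNorm_nonneg (x : ℕ → X) (hnorm : ∀ i, ‖x i‖ = 1) (l : ℕ → ℝ)
    (hl : (Function.support l).Finite) : 0 ≤ jamesDualNorm x l :=
  le_csSup (dualSet_bddAbove x hnorm l hl) (zero_mem_dualSet x l)

/-- The pairing bound `|⟨l, b⟩| ≤ J*(l) · J(b)`. -/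
lemma pairing_le (x : ℕ → X) (hnorm : ∀ i, ‖x i‖ = 1) (l b : ℕ → ℝ)
    (hl : (Function.support l).Finite) (hb : (Function.support b).Finite) :
    |∑ᶠ i, l i * b i| ≤ jamesDualNorm x l * jamesNorm x b := by
  classical
  rcases (jamesNorm_nonneg x hnorm b hb).eq_or_lt with h0 | hc
  · have hb0 : ∀ i, b i = 0 := fun i => by
      have h1 := abs_le_jamesNorm x hnorm b hb i
      rw [← h0] at h1
      exact abs_nonpos_iff.1 h1
    have hz : (fun i => l i * b i) = fun _ => (0 : ℝ) := funext fun i => by simp [hb0 i]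
    rw [hz, finsum_zero, ← h0, mul_zero, abs_zero]
  · set c := jamesNorm x b with hcdef
    have hcne : c ≠ 0 := ne_of_gt hc
    set b' : ℕ → ℝ := fun i => c⁻¹ * b i with hb'def
    have hb'supp : (Function.support b').Finite := by
      refine hb.subset fun i hi => ?_
      simp only [Function.mem_support] at hi ⊢
      exact fun h => hi (by simp [hb'def, h])
    have hJb' : jamesNorm x b' ≤ 1 := by
      refine csSup_le ⟨0, zero_mem_jamesSet x _⟩ ?_
      rintro v ⟨r, k, m, hk, hm, rfl⟩
      have hle : ‖∑ n ∈ Finset.range r, (∑ i ∈ Finset.Icc (k n) (m n), b i) • x (k n)‖ ≤ c :=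
        le_csSup (jamesSet_bddAbove x hnorm b hb) ⟨r, k, m, hk, hm, rfl⟩
      have hrw : ∑ n ∈ Finset.range r, (∑ i ∈ Finset.Icc (k n) (m n), b' i) • x (k n) =
          c⁻¹ • ∑ n ∈ Finset.range r, (∑ i ∈ Finset.Icc (k n) (m n), b i) • x (k n) := by
        rw [Finset.smul_sum]
        refine Finset.sum_congr rfl fun n _ => ?_
        rw [smul_smul]
        congr 1
        simp [hb'def, Finset.mul_sum]
      rw [hrw, norm_smul, Real.norm_eq_abs, abs_of_pos (inv_pos.2 hc)]
      calc c⁻¹ * ‖∑ n ∈ Finset.range r, (∑ i ∈ Finset.Icc (k n) (m n), b i) • x (k n)‖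
          ≤ c⁻¹ * c := mul_le_mul_of_nonneg_left hle (inv_nonneg.2 hc.le)
        _ = 1 := inv_mul_cancel₀ hcne
    have hmemdual : |∑ᶠ i, l i * b' i| ≤ jamesDualNorm x l :=
      le_csSup (dualSet_bddAbove x hnorm l hl) ⟨b', hb'supp, hJb', rfl⟩
    have h1 : ∑ᶠ i, l i * b i = ∑ i ∈ hb.toFinset, l i * b i := by
      refine finsum_eq_sum_of_support_subset _ fun i hi => ?_
      refine hb.mem_toFinset.2 fun h => ?_
      simp only [Function.mem_support, h, mul_zero, ne_eq, not_true_eq_false] at hi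
    have h2 : ∑ᶠ i, l i * b' i = ∑ i ∈ hb.toFinset, l i * b' i := by
      refine finsum_eq_sum_of_support_subset _ fun i hi => ?_
      refine hb.mem_toFinset.2 fun h => ?_
      simp only [Function.mem_support, hb'def, h, mul_zero, ne_eq, not_true_eq_false] at hi
    have key : ∑ᶠ i, l i * b i = c * ∑ᶠ i, l i * b' i := by
      rw [h1, h2, Finset.mul_sum]
      refine Finset.sum_congr rfl fun i _ => ?_
      simp only [hb'def]
      field_simp
    rw [key, abs_mul, abs_of_pos hc]
    calc c * |∑ᶠ i, l i * b' i| ≤ c * jamesDualNorm x l :=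
        mul_le_mul_of_nonneg_left hmemdual hc.le
      _ = jamesDualNorm x l * c := mul_comm _ _

/-- Convexity: multipliers in `[-1,1]` are dominated by signs. -/
lemma smul_signs_bound (s : Finset ℕ) (c b : ℕ → ℝ) (y : ℕ → X) (C : ℝ) : ∀ z : X,
    (∀ n ∈ s, |c n| ≤ 1) →
    (∀ ε : ℕ → ℝ, (∀ n, ε n = 1 ∨ ε n = -1) → ‖z + ∑ n ∈ s, (ε n * b n) • y n‖ ≤ C) →
    ‖z + ∑ n ∈ s, (c n * b n) • y n‖ ≤ C := by
  classical
  induction s using Finset.induction_on with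
  | empty => intro z _ h; simpa using h (fun _ => 1) (fun _ => Or.inl rfl)
  | @insert j s hj ih =>
    intro z hc h
    rw [Finset.sum_insert hj, ← add_assoc]
    refine ih (z + (c j * b j) • y j) (fun n hn => hc n (Finset.mem_insert_of_mem hn)) ?_
    intro ε hε
    have hcj := abs_le.1 (hc j (Finset.mem_insert_self j s))
    set t : ℝ := (c j + 1) / 2 with ht
    have ht0 : 0 ≤ t := by rw [ht]; linarith [hcj.1]
    have ht1 : t ≤ 1 := by rw [ht]; linarith [hcj.2]
    have hupd : ∀ v : ℝ, (v = 1 ∨ v = -1) →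
        ∀ n, Function.update ε j v n = 1 ∨ Function.update ε j v n = -1 := by
      intro v hv n
      rcases eq_or_ne n j with rfl | hne
      · rw [Function.update_self]; exact hv
      · rw [Function.update_of_ne hne]; exact hε n
    have hsum : ∀ v : ℝ, ∑ n ∈ s, (Function.update ε j v n * b n) • y n =
        ∑ n ∈ s, (ε n * b n) • y n := by
      intro v
      refine Finset.sum_congr rfl fun n hn => ?_
      rw [Function.update_of_ne (ne_of_mem_of_not_mem hn hj)]
    have hA : ‖z + (((1 : ℝ) * b j) • y j + ∑ n ∈ s, (ε n * b n) • y n)‖ ≤ C := by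
      have := h (Function.update ε j 1) (hupd 1 (Or.inl rfl))
      rwa [Finset.sum_insert hj, Function.update_self, hsum] at this
    have hB : ‖z + (((-1 : ℝ) * b j) • y j + ∑ n ∈ s, (ε n * b n) • y n)‖ ≤ C := by
      have := h (Function.update ε j (-1)) (hupd (-1) (Or.inr rfl))
      rwa [Finset.sum_insert hj, Function.update_self, hsum] at this
    have hcj2 : c j = 2 * t - 1 := by rw [ht]; ring
    have key : z + (c j * b j) • y j + ∑ n ∈ s, (ε n * b n) • y n =
        t • (z + (((1 : ℝ) * b j) • y j + ∑ n ∈ s, (ε n * b n) • y n)) +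
          (1 - t) • (z + (((-1 : ℝ) * b j) • y j + ∑ n ∈ s, (ε n * b n) • y n)) := by
      rw [hcj2]; module
    rw [key]
    calc ‖t • (z + (((1 : ℝ) * b j) • y j + ∑ n ∈ s, (ε n * b n) • y n)) +
          (1 - t) • (z + (((-1 : ℝ) * b j) • y j + ∑ n ∈ s, (ε n * b n) • y n))‖
        ≤ t * ‖z + (((1 : ℝ) * b j) • y j + ∑ n ∈ s, (ε n * b n) • y n)‖ +
          (1 - t) * ‖z + (((-1 : ℝ) * b j) • y j + ∑ n ∈ s, (ε n * b n) • y n)‖ := by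
          refine (norm_add_le _ _).trans ?_
          rw [norm_smul, norm_smul, Real.norm_eq_abs, Real.norm_eq_abs,
            abs_of_nonneg ht0, abs_of_nonneg (by linarith : (0:ℝ) ≤ 1 - t)]
      _ ≤ t * C + (1 - t) * C :=
          add_le_add (mul_le_mul_of_nonneg_left hA ht0)
            (mul_le_mul_of_nonneg_left hB (by linarith))
      _ = C := by ring

/-- Signs can be removed for sums over distinct basis indices. -/
lemma signs_norm_eq (x : ℕ → X) (hu : OneUnconditional x) (r : ℕ) (k : ℕ → ℕ)
    (hk : ∀ ⦃n n' : ℕ⦄, n < n' → k n < k n') (b ε : ℕ → ℝ)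
    (hε : ∀ n, ε n = 1 ∨ ε n = -1) :
    ‖∑ n ∈ Finset.range r, (ε n * b n) • x (k n)‖ =
      ‖∑ n ∈ Finset.range r, b n • x (k n)‖ := by
  classical
  have hinj : ∀ n ∈ Finset.range r, ∀ n' ∈ Finset.range r, k n = k n' → n = n' := by
    intro n _ n' _ h
    by_contra hne
    rcases lt_trichotomy n n' with hlt | he | hlt
    · exact absurd h (ne_of_lt (hk hlt))
    · exact hne he
    · exact absurd h.symm (ne_of_lt (hk hlt))
  set img := (Finset.range r).image k with himg
  have hfil : ∀ n ∈ Finset.range r,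
      (Finset.range r).filter (fun n' => k n' = k n) = {n} := by
    intro n hn
    ext n'
    simp only [Finset.mem_filter, Finset.mem_singleton]
    constructor
    · rintro ⟨hn', he⟩; exact hinj n' hn' n hn he
    · rintro rfl; exact ⟨hn, rfl⟩
  have reindex : ∀ F : ℕ → ℝ, ∑ n ∈ Finset.range r, F n • x (k n) =
      ∑ i ∈ img, (∑ n ∈ (Finset.range r).filter (fun n' => k n' = i), F n) • x i := by
    intro F
    rw [himg, Finset.sum_image hinj]
    refine Finset.sum_congr rfl fun n hn => ?_
    rw [hfil n hn, Finset.sum_singleton]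
  set E : ℕ → ℝ := fun i =>
    (∑ n ∈ (Finset.range r).filter (fun n' => k n' = i), ε n) +
      (if i ∈ img then 0 else 1) with hE
  have hfe : ∀ i, i ∉ img → (Finset.range r).filter (fun n' => k n' = i) = ∅ := by
    intro i hi
    ext n
    simp only [Finset.mem_filter, Finset.notMem_empty, iff_false, not_and]
    intro hn he
    exact hi (Finset.mem_image.2 ⟨n, hn, he⟩)
  have hE1 : ∀ i, E i = 1 ∨ E i = -1 := by
    intro i
    by_cases hi : i ∈ img
    · obtain ⟨n, hn, rfl⟩ := Finset.mem_image.1 hi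
      rw [hE]
      simp only [if_pos hi, add_zero, hfil n hn, Finset.sum_singleton]
      exact hε n
    · rw [hE]
      simp only [if_neg hi, hfe i hi, Finset.sum_empty, zero_add]
      norm_num
  have hmul : ∀ i, (∑ n ∈ (Finset.range r).filter (fun n' => k n' = i), ε n * b n) =
      E i * ∑ n ∈ (Finset.range r).filter (fun n' => k n' = i), b n := by
    intro i
    by_cases hi : i ∈ img
    · obtain ⟨n, hn, rfl⟩ := Finset.mem_image.1 hi
      rw [hE]
      simp only [if_pos hi, add_zero, hfil n hn, Finset.sum_singleton]
    · rw [hfe i hi]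
      simp
  rw [reindex (fun n => ε n * b n), reindex b]
  calc ‖∑ i ∈ img, (∑ n ∈ (Finset.range r).filter (fun n' => k n' = i), ε n * b n) • x i‖
      = ‖∑ i ∈ img, (E i * ∑ n ∈ (Finset.range r).filter (fun n' => k n' = i), b n) • x i‖ := by
        congr 1
        exact Finset.sum_congr rfl fun i _ => by rw [hmul i]
    _ = ‖∑ i ∈ img, (∑ n ∈ (Finset.range r).filter (fun n' => k n' = i), b n) • x i‖ :=
        hu img _ E hE1

lemma sum_stepFn_mul (r : ℕ) (k m : ℕ → ℕ) (d : ℕ → ℝ) (c : ℕ → ℝ) (s : Finset ℕ) :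
    ∑ i ∈ s, stepFn r k m d i * c i =
      ∑ n ∈ Finset.range r, d n * ∑ i ∈ Finset.Icc (k n) (m n) ∩ s, c i := by
  classical
  unfold stepFn
  have step1 : ∀ i ∈ s,
      (∑ n ∈ (Finset.range r).filter (fun n => k n ≤ i ∧ i ≤ m n), d n) * c i =
        ∑ n ∈ Finset.range r, if k n ≤ i ∧ i ≤ m n then d n * c i else 0 := by
    intro i _
    rw [Finset.sum_filter, Finset.sum_mul]
    refine Finset.sum_congr rfl fun n _ => ?_
    split_ifs <;> simp
  rw [Finset.sum_congr rfl step1, Finset.sum_comm]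
  refine Finset.sum_congr rfl fun n _ => ?_
  rw [Finset.mul_sum, ← Finset.sum_filter]
  have hset : s.filter (fun i => k n ≤ i ∧ i ≤ m n) = Finset.Icc (k n) (m n) ∩ s := by
    ext i
    simp only [Finset.mem_filter, Finset.mem_inter, Finset.mem_Icc]
    tauto
  rw [hset]

/-- Core lemma: multiplying coefficients by a step function of a norm-one functional
at most doubles the James norm. -/
lemma jamesNorm_stepFn_mul_le (x : ℕ → X) (hnorm : ∀ i, ‖x i‖ = 1) (hu : OneUnconditional x)
    (a : ℕ → ℝ) (ha : (Function.support a).Finite)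
    (r : ℕ) (k m : ℕ → ℕ) (hk : ∀ n, k n ≤ m n) (hm : ∀ n, m n < k (n + 1))
    (f : X →L[ℝ] ℝ) (hf : ‖f‖ ≤ 1) :
    jamesNorm x (fun i => stepFn r k m (fun n => f (x (k n))) i * a i) ≤
      2 * jamesNorm x a := by
  classical
  set d : ℕ → ℝ := fun n => f (x (k n)) with hd
  have hdle : ∀ n, |d n| ≤ 1 := by
    intro n
    calc |d n| = ‖f (x (k n))‖ := (Real.norm_eq_abs _).symm
      _ ≤ ‖f‖ * ‖x (k n)‖ := f.le_opNorm _
      _ ≤ 1 := by rw [hnorm, mul_one]; exact hf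
  refine csSup_le ⟨0, zero_mem_jamesSet x _⟩ ?_
  rintro v ⟨ρ, u, w, huw, hwu, rfl⟩
  set W := ∑ p ∈ Finset.range ρ,
    (∑ i ∈ Finset.Icc (u p) (w p), stepFn r k m d i * a i) • x (u p) with hW
  obtain ⟨g, hg1, hgW⟩ := exists_dual_vector'' (𝕜 := ℝ) W
  have hgW' : g W = ‖W‖ := by exact_mod_cast hgW
  set e : ℕ → ℝ := fun p => g (x (u p)) with he
  have hele : ∀ p, |e p| ≤ 1 := by
    intro p
    calc |e p| = ‖g (x (u p))‖ := (Real.norm_eq_abs _).symm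
      _ ≤ ‖g‖ * ‖x (u p)‖ := g.le_opNorm _
      _ ≤ 1 := by rw [hnorm, mul_one]; exact hg1
  set csum : ℕ → ℕ → ℝ :=
    fun n p => ∑ i ∈ Finset.Icc (k n) (m n) ∩ Finset.Icc (u p) (w p), a i with hcsum
  have hcsum0A : ∀ n p, w p < k n → csum n p = 0 := by
    intro n p hwp
    simp only [hcsum]
    rw [Icc_inter_Icc_nat, Finset.Icc_eq_empty, Finset.sum_empty]
    intro hcon
    exact absurd (le_trans (le_max_left _ _) (hcon.trans (min_le_right _ _))) (not_le.2 hwp)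
  have hcsum0B : ∀ n p, m n < u p → csum n p = 0 := by
    intro n p hmp
    simp only [hcsum]
    rw [Icc_inter_Icc_nat, Finset.Icc_eq_empty, Finset.sum_empty]
    intro hcon
    exact absurd (le_trans (le_max_right _ _) (hcon.trans (min_le_left _ _))) (not_le.2 hmp)
  have hgW2 : g W = ∑ p ∈ Finset.range ρ, ∑ n ∈ Finset.range r,
      (d n * e p) * csum n p := by
    simp only [hcsum]
    rw [hW, map_sum]
    refine Finset.sum_congr rfl fun p _ => ?_
    rw [map_smul, smul_eq_mul, sum_stepFn_mul, Finset.sum_mul]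
    refine Finset.sum_congr rfl fun n _ => ?_
    simp only [he]
    ring
  set SA := ∑ n ∈ Finset.range r, ∑ p ∈ Finset.range ρ,
    (if u p ≤ k n then (d n * e p) * csum n p else 0) with hSA
  set SB := ∑ p ∈ Finset.range ρ, ∑ n ∈ Finset.range r,
    (if u p ≤ k n then 0 else (d n * e p) * csum n p) with hSB
  have hgWsplit : g W = SA + SB := by
    rw [hgW2, hSA, hSB]
    have hterm : ∀ p ∈ Finset.range ρ, ∀ n ∈ Finset.range r,
        (d n * e p) * csum n p =
          (if u p ≤ k n then (d n * e p) * csum n p else 0) +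
            (if u p ≤ k n then 0 else (d n * e p) * csum n p) := by
      intro p _ n _
      split_ifs <;> ring
    calc ∑ p ∈ Finset.range ρ, ∑ n ∈ Finset.range r, (d n * e p) * csum n p
        = ∑ p ∈ Finset.range ρ, ∑ n ∈ Finset.range r,
            ((if u p ≤ k n then (d n * e p) * csum n p else 0) +
              (if u p ≤ k n then 0 else (d n * e p) * csum n p)) :=
          Finset.sum_congr rfl fun p hp => Finset.sum_congr rfl fun n hn => hterm p hp n hn
      _ = (∑ p ∈ Finset.range ρ, ∑ n ∈ Finset.range r,
            (if u p ≤ k n then (d n * e p) * csum n p else 0)) +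
          ∑ p ∈ Finset.range ρ, ∑ n ∈ Finset.range r,
            (if u p ≤ k n then 0 else (d n * e p) * csum n p) := by
          simp [Finset.sum_add_distrib]
      _ = _ := by
          congr 1
          exact Finset.sum_comm
  -- A-side
  set PA : ℕ → Finset ℕ :=
    fun n => (Finset.range ρ).filter (fun p => u p ≤ k n ∧ k n ≤ w p) with hPA
  set cA : ℕ → ℝ := fun n => ∑ p ∈ PA n, e p with hcA
  set mA : ℕ → ℕ := fun n => max (k n) (min (m n) (∑ p ∈ PA n, w p)) with hmA
  set bA : ℕ → ℝ := fun n => ∑ i ∈ Finset.Icc (k n) (mA n), a i with hbA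
  have hcAle : ∀ n ∈ Finset.range r, |cA n| ≤ 1 := by
    intro n _
    rcases Finset.eq_empty_or_nonempty (PA n) with hem | ⟨p₀, hp₀⟩
    · simp [hcA, hem]
    · have hsing : PA n = {p₀} := by
        refine Finset.eq_singleton_iff_unique_mem.2 ⟨hp₀, fun p hp => ?_⟩
        simp only [hPA, Finset.mem_filter] at hp hp₀
        exact block_unique huw hwu ⟨hp.2.1, hp.2.2⟩ ⟨hp₀.2.1, hp₀.2.2⟩
      simp only [hcA, hsing, Finset.sum_singleton]
      exact hele p₀
  have hAcollapse : ∀ n ∈ Finset.range r,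
      ∑ p ∈ Finset.range ρ, (if u p ≤ k n then (d n * e p) * csum n p else 0) =
        (cA n * bA n) * d n := by
    intro n _
    by_cases hex : ∃ p₀ ∈ Finset.range ρ, u p₀ ≤ k n ∧ k n ≤ w p₀
    · obtain ⟨p₀, hp₀, h1, h2⟩ := hex
      have hPAeq : PA n = {p₀} := by
        ext p
        simp only [hPA, Finset.mem_filter, Finset.mem_singleton]
        constructor
        · rintro ⟨hp, hp1, hp2⟩
          exact block_unique huw hwu ⟨hp1, hp2⟩ ⟨h1, h2⟩
        · rintro rfl
          exact ⟨hp₀, h1, h2⟩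
      have hcAeq : cA n = e p₀ := by simp [hcA, hPAeq]
      have hwAeq : (∑ p ∈ PA n, w p) = w p₀ := by simp [hPAeq]
      have hmin : k n ≤ min (m n) (w p₀) := le_min (hk n) h2
      have hmAeq : mA n = min (m n) (w p₀) := by
        simp only [hmA, hwAeq]
        exact max_eq_right hmin
      have hcell : csum n p₀ = bA n := by
        simp only [hcsum, hbA, hmAeq]
        rw [Icc_inter_Icc_nat, max_eq_left h1]
      rw [Finset.sum_eq_single p₀ ?_ ?_]
      · rw [if_pos h1, hcell, hcAeq]
        try ring
      · intro p hp hne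
        by_cases hup : u p ≤ k n
        · rw [if_pos hup]
          have hwp : w p < k n := by
            by_contra hh
            push_neg at hh
            exact hne (block_unique huw hwu ⟨hup, hh⟩ ⟨h1, h2⟩)
          rw [hcsum0A n p hwp, mul_zero]
        · rw [if_neg hup]
      · intro habs
        exact absurd hp₀ habs
    · push_neg at hex
      have hPAemp : PA n = ∅ := by
        ext p
        simp only [hPA, Finset.mem_filter, Finset.notMem_empty, iff_false, not_and]
        intro hp h1
        exact fun h2 => absurd h2 (not_le.2 (hex p hp h1))
      have hcA0 : cA n = 0 := by simp [hcA, hPAemp]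
      rw [hcA0, zero_mul, zero_mul]
      refine Finset.sum_eq_zero fun p hp => ?_
      by_cases hup : u p ≤ k n
      · rw [if_pos hup, hcsum0A n p (hex p hp hup), mul_zero]
      · rw [if_neg hup]
  have hvecA : ‖∑ n ∈ Finset.range r, (cA n * bA n) • x (k n)‖ ≤ jamesNorm x a := by
    have h0 : ∀ ε : ℕ → ℝ, (∀ n, ε n = 1 ∨ ε n = -1) →
        ‖(0 : X) + ∑ n ∈ Finset.range r, (ε n * bA n) • x (k n)‖ ≤ jamesNorm x a := by
      intro ε hε
      rw [zero_add, signs_norm_eq x hu r k (config_strictMono hk hm) bA ε hε]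
      refine le_csSup (jamesSet_bddAbove x hnorm a ha) ?_
      refine ⟨r, k, mA, fun n => le_max_left _ _, fun n => ?_, ?_⟩
      · refine lt_of_le_of_lt ?_ (hm n)
        exact max_le (hk n) (min_le_left _ _)
      · simp only [hbA]
    have := smul_signs_bound (Finset.range r) cA bA (fun n => x (k n))
      (jamesNorm x a) 0 hcAle h0
    simpa using this
  have hSAle : |SA| ≤ jamesNorm x a := by
    have hSAf : SA = f (∑ n ∈ Finset.range r, (cA n * bA n) • x (k n)) := by
      rw [map_sum, hSA, Finset.sum_congr rfl hAcollapse]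
      refine Finset.sum_congr rfl fun n _ => ?_
      rw [map_smul, smul_eq_mul]
    rw [hSAf]
    calc |f (∑ n ∈ Finset.range r, (cA n * bA n) • x (k n))|
        = ‖f (∑ n ∈ Finset.range r, (cA n * bA n) • x (k n))‖ := (Real.norm_eq_abs _).symm
      _ ≤ ‖f‖ * ‖∑ n ∈ Finset.range r, (cA n * bA n) • x (k n)‖ := f.le_opNorm _
      _ ≤ 1 * ‖∑ n ∈ Finset.range r, (cA n * bA n) • x (k n)‖ :=
          mul_le_mul_of_nonneg_right hf (norm_nonneg _)
      _ = ‖∑ n ∈ Finset.range r, (cA n * bA n) • x (k n)‖ := one_mul _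
      _ ≤ jamesNorm x a := hvecA
  -- B-side
  set PB : ℕ → Finset ℕ :=
    fun p => (Finset.range r).filter (fun n => k n < u p ∧ u p ≤ m n) with hPB
  set cB : ℕ → ℝ := fun p => ∑ n ∈ PB p, d n with hcB
  set mB : ℕ → ℕ := fun p => max (u p) (min (w p) (∑ n ∈ PB p, m n)) with hmB
  set bB : ℕ → ℝ := fun p => ∑ i ∈ Finset.Icc (u p) (mB p), a i with hbB
  have hcBle : ∀ p ∈ Finset.range ρ, |cB p| ≤ 1 := by
    intro p _
    rcases Finset.eq_empty_or_nonempty (PB p) with hem | ⟨n₀, hn₀⟩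
    · simp [hcB, hem]
    · have hsing : PB p = {n₀} := by
        refine Finset.eq_singleton_iff_unique_mem.2 ⟨hn₀, fun n hn => ?_⟩
        simp only [hPB, Finset.mem_filter] at hn hn₀
        exact block_unique hk hm ⟨hn.2.1.le, hn.2.2⟩ ⟨hn₀.2.1.le, hn₀.2.2⟩
      simp only [hcB, hsing, Finset.sum_singleton]
      exact hdle n₀
  have hBcollapse : ∀ p ∈ Finset.range ρ,
      ∑ n ∈ Finset.range r, (if u p ≤ k n then 0 else (d n * e p) * csum n p) =
        (cB p * bB p) * e p := by
    intro p _
    by_cases hex : ∃ n₀ ∈ Finset.range r, k n₀ < u p ∧ u p ≤ m n₀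
    · obtain ⟨n₀, hn₀, h1, h2⟩ := hex
      have hPBeq : PB p = {n₀} := by
        ext n
        simp only [hPB, Finset.mem_filter, Finset.mem_singleton]
        constructor
        · rintro ⟨hn, hn1, hn2⟩
          exact block_unique hk hm ⟨hn1.le, hn2⟩ ⟨h1.le, h2⟩
        · rintro rfl
          exact ⟨hn₀, h1, h2⟩
      have hcBeq : cB p = d n₀ := by simp [hcB, hPBeq]
      have hmBsum : (∑ n ∈ PB p, m n) = m n₀ := by simp [hPBeq]
      have hmin : u p ≤ min (w p) (m n₀) := le_min (huw p) h2
      have hmBeq : mB p = min (w p) (m n₀) := by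
        simp only [hmB, hmBsum]
        exact max_eq_right hmin
      have hcell : csum n₀ p = bB p := by
        simp only [hcsum, hbB, hmBeq]
        rw [Icc_inter_Icc_nat, max_eq_right h1.le, min_comm]
      rw [Finset.sum_eq_single n₀ ?_ ?_]
      · rw [if_neg (not_le.2 h1), hcell, hcBeq]
        try ring
      · intro n hn hne
        by_cases hup : u p ≤ k n
        · rw [if_pos hup]
        · rw [if_neg hup]
          push_neg at hup
          have hmn : m n < u p := by
            by_contra hh
            push_neg at hh
            exact hne (block_unique hk hm ⟨hup.le, hh⟩ ⟨h1.le, h2⟩)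
          rw [hcsum0B n p hmn, mul_zero]
      · intro habs
        exact absurd hn₀ habs
    · push_neg at hex
      have hPBemp : PB p = ∅ := by
        ext n
        simp only [hPB, Finset.mem_filter, Finset.notMem_empty, iff_false, not_and]
        intro hn h1
        exact fun h2 => absurd h2 (not_le.2 (hex n hn h1))
      have hcB0 : cB p = 0 := by simp [hcB, hPBemp]
      rw [hcB0, zero_mul, zero_mul]
      refine Finset.sum_eq_zero fun n hn => ?_
      by_cases hup : u p ≤ k n
      · rw [if_pos hup]
      · rw [if_neg hup]
        push_neg at hup
        rw [hcsum0B n p (hex n hn hup), mul_zero]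
  have hvecB : ‖∑ p ∈ Finset.range ρ, (cB p * bB p) • x (u p)‖ ≤ jamesNorm x a := by
    have h0 : ∀ ε : ℕ → ℝ, (∀ p, ε p = 1 ∨ ε p = -1) →
        ‖(0 : X) + ∑ p ∈ Finset.range ρ, (ε p * bB p) • x (u p)‖ ≤ jamesNorm x a := by
      intro ε hε
      rw [zero_add, signs_norm_eq x hu ρ u (config_strictMono huw hwu) bB ε hε]
      refine le_csSup (jamesSet_bddAbove x hnorm a ha) ?_
      refine ⟨ρ, u, mB, fun p => le_max_left _ _, fun p => ?_, ?_⟩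
      · refine lt_of_le_of_lt ?_ (hwu p)
        exact max_le (huw p) (min_le_left _ _)
      · simp only [hbB]
    have := smul_signs_bound (Finset.range ρ) cB bB (fun p => x (u p))
      (jamesNorm x a) 0 hcBle h0
    simpa using this
  have hSBle : |SB| ≤ jamesNorm x a := by
    have hSBg : SB = g (∑ p ∈ Finset.range ρ, (cB p * bB p) • x (u p)) := by
      rw [map_sum, hSB, Finset.sum_congr rfl hBcollapse]
      refine Finset.sum_congr rfl fun p _ => ?_
      rw [map_smul, smul_eq_mul]
    rw [hSBg]
    calc |g (∑ p ∈ Finset.range ρ, (cB p * bB p) • x (u p))|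
        = ‖g (∑ p ∈ Finset.range ρ, (cB p * bB p) • x (u p))‖ := (Real.norm_eq_abs _).symm
      _ ≤ ‖g‖ * ‖∑ p ∈ Finset.range ρ, (cB p * bB p) • x (u p)‖ := g.le_opNorm _
      _ ≤ 1 * ‖∑ p ∈ Finset.range ρ, (cB p * bB p) • x (u p)‖ :=
          mul_le_mul_of_nonneg_right hg1 (norm_nonneg _)
      _ = ‖∑ p ∈ Finset.range ρ, (cB p * bB p) • x (u p)‖ := one_mul _
      _ ≤ jamesNorm x a := hvecB
  calc ‖W‖ = g W := hgW'.symm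
    _ = SA + SB := hgWsplit
    _ ≤ |SA| + |SB| := add_le_add (le_abs_self _) (le_abs_self _)
    _ ≤ jamesNorm x a + jamesNorm x a := add_le_add hSAle hSBle
    _ = 2 * jamesNorm x a := by ring

/-- `J(μ·a) ≤ 2 J*(μ) J(a)`. -/
lemma jamesNorm_mul_le (x : ℕ → X) (hnorm : ∀ i, ‖x i‖ = 1) (hu : OneUnconditional x)
    (μ a : ℕ → ℝ) (hμ : (Function.support μ).Finite) (ha : (Function.support a).Finite) :
    jamesNorm x (fun i => μ i * a i) ≤ 2 * jamesDualNorm x μ * jamesNorm x a := by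
  classical
  refine csSup_le ⟨0, zero_mem_jamesSet x _⟩ ?_
  rintro v ⟨r, k, m, hk, hm, rfl⟩
  set V := ∑ n ∈ Finset.range r, (∑ i ∈ Finset.Icc (k n) (m n), μ i * a i) • x (k n) with hV
  obtain ⟨f, hf1, hfV⟩ := exists_dual_vector'' (𝕜 := ℝ) V
  have hfV' : f V = ‖V‖ := by exact_mod_cast hfV
  set d : ℕ → ℝ := fun n => f (x (k n)) with hd
  set φ := stepFn r k m d with hφ
  set b : ℕ → ℝ := fun i => φ i * a i with hbdef
  have hbsupp : (Function.support b).Finite := by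
    refine ha.subset fun i hi => ?_
    simp only [Function.mem_support, hbdef] at hi ⊢
    exact fun h => hi (by simp [h])
  have hfV2 : f V = ∑ᶠ i, μ i * b i := by
    have hsupp : Function.support (fun i => μ i * b i) ⊆ ↑ha.toFinset := by
      intro i hi
      simp only [Function.mem_support, hbdef] at hi
      refine ha.mem_toFinset.2 fun h => hi ?_
      simp [h]
    rw [finsum_eq_sum_of_support_subset _ hsupp]
    have hcongr : ∀ i ∈ ha.toFinset, μ i * b i = φ i * (μ i * a i) := fun i _ => by
      rw [hbdef]; ring
    rw [Finset.sum_congr rfl hcongr, hφ, sum_stepFn_mul, hV, map_sum]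
    refine Finset.sum_congr rfl fun n _ => ?_
    rw [map_smul, smul_eq_mul]
    have hrestrict : ∑ i ∈ Finset.Icc (k n) (m n) ∩ ha.toFinset, μ i * a i =
        ∑ i ∈ Finset.Icc (k n) (m n), μ i * a i := by
      refine Finset.sum_subset Finset.inter_subset_left fun i hi hni => ?_
      have : a i = 0 := by
        by_contra h
        exact hni (Finset.mem_inter.2 ⟨hi, ha.mem_toFinset.2 h⟩)
      simp [this]
    rw [hrestrict, mul_comm]
  have step1 : ‖V‖ ≤ |∑ᶠ i, μ i * b i| := by
    rw [← hfV2, hfV']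
    exact le_abs_self _
  have step2 : |∑ᶠ i, μ i * b i| ≤ jamesDualNorm x μ * jamesNorm x b :=
    pairing_le x hnorm μ b hμ hbsupp
  have step3 : jamesNorm x b ≤ 2 * jamesNorm x a := by
    rw [hbdef, hφ, hd]
    exact jamesNorm_stepFn_mul_le x hnorm hu a ha r k m hk hm f hf1
  calc ‖V‖ ≤ jamesDualNorm x μ * jamesNorm x b := step1.trans step2
    _ ≤ jamesDualNorm x μ * (2 * jamesNorm x a) :=
        mul_le_mul_of_nonneg_left step3 (jamesDualNorm_nonneg x hnorm μ hμ)
    _ = 2 * jamesDualNorm x μ * jamesNorm x a := by ring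

/-- **Theorem.** For a normalized 1-unconditional sequence, the dual jamesification norm is
submultiplicative with constant 2. -/
theorem jamesDualNorm_submultiplicative
    (X : Type) [NormedAddCommGroup X] [NormedSpace ℝ X]
    (x : ℕ → X) (hnorm : ∀ i, ‖x i‖ = 1) (hu : OneUnconditional x)
    (l μ : ℕ → ℝ) (hl : (Function.support l).Finite) (hμ : (Function.support μ).Finite) :
    jamesDualNorm x (fun i => l i * μ i) ≤ 2 * jamesDualNorm x l * jamesDualNorm x μ := by
  classical
  refine csSup_le ⟨0, zero_mem_dualSet x _⟩ ?_
  rintro v ⟨a, ha, hJa, rfl⟩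
  have hre : (fun i => (l i * μ i) * a i) = fun i => l i * (μ i * a i) :=
    funext fun i => by ring
  set b : ℕ → ℝ := fun i => μ i * a i with hbdef
  have hbsupp : (Function.support b).Finite := by
    refine ha.subset fun i hi => ?_
    simp only [Function.mem_support, hbdef] at hi ⊢
    exact fun h => hi (by simp [h])
  have h1 : |∑ᶠ i, (l i * μ i) * a i| = |∑ᶠ i, l i * b i| := by rw [hre]
  have h2 : |∑ᶠ i, l i * b i| ≤ jamesDualNorm x l * jamesNorm x b :=
    pairing_le x hnorm l b hl hbsupp
  have h3 : jamesNorm x b ≤ 2 * jamesDualNorm x μ * jamesNorm x a :=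
    jamesNorm_mul_le x hnorm hu μ a hμ ha
  have h4 : jamesNorm x b ≤ 2 * jamesDualNorm x μ := by
    refine h3.trans ?_
    calc 2 * jamesDualNorm x μ * jamesNorm x a ≤ 2 * jamesDualNorm x μ * 1 := by
          refine mul_le_mul_of_nonneg_left hJa ?_
          have := jamesDualNorm_nonneg x hnorm μ hμ
          linarith
      _ = 2 * jamesDualNorm x μ := mul_one _
  calc |∑ᶠ i, (l i * μ i) * a i| ≤ jamesDualNorm x l * jamesNorm x b := h1.le.trans h2
    _ ≤ jamesDualNorm x l * (2 * jamesDualNorm x μ) :=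
        mul_le_mul_of_nonneg_left h4 (jamesDualNorm_nonneg x hnorm l hl)
    _ = 2 * jamesDualNorm x l * jamesDualNorm x μ := by ring
end

section
/- Let (x_i) be a normalized 1-unconditional sequence in a real Banach space X. Then for all finitely supported a, b : ℕ → ℝ, V((a_i·b_i)_{i≥1}) ≤ 2·V(a)·V(b). -/
open scoped BigOperators


variable {X : Type*} [NormedAddCommGroup X] [NormedSpace ℝ X]

/-!
Split `(ab)(k) - (ab)(m) = b(k) (a(k) - a(m)) + a(m) (b(k) - b(m))`. For a 1-unconditional
sequence, multiplying the coefficients by scalars of modulus at most `M` multiplies the norm by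
at most `M`; and `|b(k)| ≤ V(b)`, `|a(m)| ≤ V(a)`, by testing `V` on a single pair whose second
index lies outside the support. So each half of a test sum for `V(ab)` is at most `V(a) V(b)`.
-/

theorem Set.Finite.sum_abs_comp_le {ι κ : Type*} {f : ι → ℝ} (hf : (Function.support f).Finite)
    {k : κ → ι} (hk : Function.Injective k) (t : Finset κ) :
    ∑ n ∈ t, |f (k n)| ≤ ∑ i ∈ hf.toFinset, |f i| := by
  classical
  rw [← Finset.sum_image (f := fun i => |f i|) hk.injOn]
  calc ∑ i ∈ t.image k, |f i| ≤ ∑ i ∈ t.image k ∪ hf.toFinset, |f i| :=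
        Finset.sum_le_sum_of_subset_of_nonneg Finset.subset_union_left
          fun _ _ _ => abs_nonneg _
    _ = ∑ i ∈ hf.toFinset, |f i| :=
        (Finset.sum_subset Finset.subset_union_right fun i _ hi => by simpa using hi).symm

/-- On the cube `[-M, M]^ι` the convex function `c ↦ ‖∑ i, c i • v i‖` is maximal at a vertex,
and at the vertices the sign condition pins its value to `M * ‖∑ i, v i‖`. -/
theorem norm_sum_smul_le_of_norm_sum_sign_smul_le {ι : Type*} [Fintype ι] {v : ι → X}
    (hv : ∀ σ : ι → ℝ, (∀ i, σ i = 1 ∨ σ i = -1) → ‖∑ i, σ i • v i‖ ≤ ‖∑ i, v i‖)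
    {c : ι → ℝ} {M : ℝ} (hM : 0 ≤ M) (hc : ∀ i, |c i| ≤ M) :
    ‖∑ i, c i • v i‖ ≤ M * ‖∑ i, v i‖ := by
  have hcube : c ∈ convexHull ℝ (Set.univ.pi fun _ => ({-M, M} : Set ℝ)) := by
    rw [convexHull_pi, convexHull_pair, segment_eq_Icc (by linarith)]
    exact fun i _ => abs_le.mp (hc i)
  obtain ⟨ε, hε, hcε⟩ := (convexOn_univ_norm.comp_linearMap
    (Fintype.linearCombination ℝ v)).exists_ge_of_mem_convexHull (Set.subset_univ _) hcube
  simp only [Function.comp_apply, Fintype.linearCombination_apply] at hcε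
  set σ : ι → ℝ := fun i => if ε i = M then 1 else -1
  have hεσ : ε = fun i => M * σ i := by
    funext i
    by_cases h : ε i = M
    · simp [σ, h]
    · have : ε i = -M := (hε i (Set.mem_univ i)).resolve_right h
      simp [σ, this]
  calc ‖∑ i, c i • v i‖ ≤ ‖∑ i, ε i • v i‖ := hcε
    _ = M * ‖∑ i, σ i • v i‖ := by
      simp only [hεσ, mul_smul, ← Finset.smul_sum, norm_smul, Real.norm_of_nonneg hM]
    _ ≤ M * ‖∑ i, v i‖ :=
      mul_le_mul_of_nonneg_left (hv σ fun i => by by_cases h : ε i = M <;> simp [σ, h]) hM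

section

variable {x : ℕ → X} {f : ℕ → ℝ}

theorem OneUnconditional.comp_injective (hu : OneUnconditional x) {k : ℕ → ℕ}
    (hk : Function.Injective k) : OneUnconditional fun n => x (k n) := by
  intro s a ε hε
  set g := Function.invFun k
  have hgk : ∀ n, g (k n) = n := Function.leftInverse_invFun hk
  have hsum : ∀ e : ℕ → ℝ, ∑ n ∈ s, e n • x (k n) = ∑ i ∈ s.image k, e (g i) • x i := by
    intro e
    rw [Finset.sum_image hk.injOn]
    simp only [hgk]
  rw [hsum (fun n => ε n * a n), hsum a]
  exact hu _ (fun i => a (g i)) (fun i => ε (g i)) fun i => hε (g i)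

theorem OneUnconditional.norm_sum_mul_smul_le (hu : OneUnconditional x) {s : Finset ℕ}
    {c : ℕ → ℝ} {M : ℝ} (hM : 0 ≤ M) (hc : ∀ i ∈ s, |c i| ≤ M) (d : ℕ → ℝ) :
    ‖∑ i ∈ s, (c i * d i) • x i‖ ≤ M * ‖∑ i ∈ s, d i • x i‖ := by
  simp only [mul_smul, ← s.sum_coe_sort]
  refine norm_sum_smul_le_of_norm_sum_sign_smul_le (fun σ hσ => ?_) hM fun i => hc i i.2
  classical
  let σ' : ℕ → ℝ := fun i => if h : i ∈ s then σ ⟨i, h⟩ else 1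
  have hσ' : ∀ i, σ' i = 1 ∨ σ' i = -1 := fun i => by
    by_cases h : i ∈ s
    · simpa [σ', h] using hσ ⟨i, h⟩
    · simp [σ', h]
  have key := hu s d σ' hσ'
  simp only [mul_smul, ← s.sum_coe_sort] at key
  simpa [σ'] using key.le

theorem bddAbove_varSet (hnorm : ∀ i, ‖x i‖ = 1) (hf : (Function.support f).Finite) :
    BddAbove (varSet x f) := by
  refine ⟨2 * ∑ i ∈ hf.toFinset, |f i|, ?_⟩
  rintro _ ⟨r, k, m, hkm, hmk, rfl⟩
  have hk : StrictMono k := strictMono_nat_of_lt_succ fun n => (hkm n).trans_le (hmk n)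
  have hm : StrictMono m := strictMono_nat_of_lt_succ fun n => (hmk n).trans_lt (hkm (n + 1))
  calc _ ≤ ∑ n ∈ Finset.range r, |f (k n) - f (m n)| := by
        refine (norm_sum_le _ _).trans_eq (Finset.sum_congr rfl fun n _ => ?_)
        rw [norm_smul, hnorm, mul_one, Real.norm_eq_abs]
    _ ≤ ∑ n ∈ Finset.range r, (|f (k n)| + |f (m n)|) :=
        Finset.sum_le_sum fun n _ => abs_sub _ _
    _ ≤ _ := by
        rw [Finset.sum_add_distrib, two_mul]
        exact add_le_add (hf.sum_abs_comp_le hk.injective _) (hf.sum_abs_comp_le hm.injective _)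

theorem norm_sum_le_varNorm (hnorm : ∀ i, ‖x i‖ = 1) (hf : (Function.support f).Finite)
    {k m : ℕ → ℕ} (hkm : ∀ n, k n < m n) (hmk : ∀ n, m n ≤ k (n + 1)) (r : ℕ) :
    ‖∑ n ∈ Finset.range r, (f (k n) - f (m n)) • x (k n)‖ ≤ varNorm x f :=
  le_csSup (bddAbove_varSet hnorm hf) ⟨r, k, m, hkm, hmk, rfl⟩

theorem abs_le_varNorm (hnorm : ∀ i, ‖x i‖ = 1) (hf : (Function.support f).Finite) (i : ℕ) :
    |f i| ≤ varNorm x f := by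
  obtain ⟨N, hfN, hiN⟩ := hf.infinite_compl.exists_gt i
  have h := norm_sum_le_varNorm hnorm hf (k := fun n => i + n * N) (m := fun n => N + n * N)
    (fun n => by omega) (fun n => by rw [add_mul, one_mul]; omega) 1
  simpa [Function.notMem_support.mp hfN, norm_smul, hnorm] using h

theorem norm_sum_mul_sub_smul_le_varNorm (hnorm : ∀ i, ‖x i‖ = 1) (hu : OneUnconditional x)
    (hf : (Function.support f).Finite) {k m : ℕ → ℕ} (hkm : ∀ n, k n < m n)
    (hmk : ∀ n, m n ≤ k (n + 1)) (r : ℕ) {c : ℕ → ℝ} {M : ℝ} (hM : 0 ≤ M)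
    (hc : ∀ n, |c n| ≤ M) :
    ‖∑ n ∈ Finset.range r, (c n * (f (k n) - f (m n))) • x (k n)‖ ≤ M * varNorm x f := by
  have hk : StrictMono k := strictMono_nat_of_lt_succ fun n => (hkm n).trans_le (hmk n)
  exact ((hu.comp_injective hk.injective).norm_sum_mul_smul_le hM (fun n _ => hc n) _).trans
    (mul_le_mul_of_nonneg_left (norm_sum_le_varNorm hnorm hf hkm hmk r) hM)

end

/-- **Theorem.** For a normalized 1-unconditional sequence, the variation norm is
submultiplicative with constant 2. -/
theorem varNorm_submultiplicative
    (X : Type) [NormedAddCommGroup X] [NormedSpace ℝ X]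
    (x : ℕ → X) (hnorm : ∀ i, ‖x i‖ = 1) (hu : OneUnconditional x)
    (a bb : ℕ → ℝ) (ha : (Function.support a).Finite) (hb : (Function.support bb).Finite) :
    varNorm x (fun i => a i * bb i) ≤ 2 * varNorm x a * varNorm x bb := by
  have hVa : 0 ≤ varNorm x a := (abs_nonneg _).trans (abs_le_varNorm hnorm ha 0)
  have hVb : 0 ≤ varNorm x bb := (abs_nonneg _).trans (abs_le_varNorm hnorm hb 0)
  refine Real.sSup_le ?_ (by positivity)
  rintro _ ⟨r, k, m, hkm, hmk, rfl⟩
  have hprod : ∀ n, a (k n) * bb (k n) - a (m n) * bb (m n)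
      = bb (k n) * (a (k n) - a (m n)) + a (m n) * (bb (k n) - bb (m n)) := fun n => by ring
  simp only [hprod, add_smul, Finset.sum_add_distrib]
  calc _ ≤ _ := norm_add_le _ _
    _ ≤ varNorm x bb * varNorm x a + varNorm x a * varNorm x bb :=
      add_le_add
        (norm_sum_mul_sub_smul_le_varNorm hnorm hu ha hkm hmk r hVb
          fun n => abs_le_varNorm hnorm hb (k n))
        (norm_sum_mul_sub_smul_le_varNorm hnorm hu hb hkm hmk r hVa
          fun n => abs_le_varNorm hnorm ha (m n))
    _ = 2 * varNorm x a * varNorm x bb := by ring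
end

section
/- Let (x_i) be a sequence in a real Banach space X that is suppression 1-unconditional (‖Σ_{i∈F} a_i x_i‖ ≤ ‖Σ_i a_i x_i‖ for every finitely supported family of scalars (a_i) and every finite set F of indices) and C-right dominant. Then for every finitely supported family of scalars (a_i) and all indices 1 ≤ k_1 < m_1 ≤ k_2 < m_2 ≤ k_3 < m_3 ≤ ⋯, one has ‖Σ_i a_i x_{k_i}‖ ≤ 2C·‖Σ_i a_i x_{m_i}‖. -/
open scoped BigOperators

variable {X : Type*} [NormedAddCommGroup X] [NormedSpace ℝ X]

/-- A sequence is suppression 1-unconditional if deleting coefficients from a finite linear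
combination can only decrease the norm. -/
def SuppressionOneUnconditional (x : ℕ → X) : Prop :=
  ∀ (a : ℕ → ℝ) (s F : Finset ℕ), F ⊆ s →
    ‖∑ i ∈ F, a i • x i‖ ≤ ‖∑ i ∈ s, a i • x i‖

/-- A sequence `x` is `C`-right dominant: for indices `k 0 ≤ m 0 < k 1 ≤ m 1 < ⋯` every
finite linear combination along the `k`'s is `C`-dominated by the same combination along
the `m`'s. -/
def RightDominant (C : ℝ) (x : ℕ → X) : Prop :=
  ∀ (r : ℕ) (k m : ℕ → ℕ) (a : ℕ → ℝ), (∀ i, k i ≤ m i) → (∀ i, m i < k (i + 1)) →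
    ‖∑ i ∈ Finset.range r, a i • x (k i)‖ ≤ C * ‖∑ i ∈ Finset.range r, a i • x (m i)‖

lemma aux_supp (x : ℕ → X)
    (hsupp : ∀ (a : ℕ → ℝ) (s F : Finset ℕ), F ⊆ s →
      ‖∑ i ∈ F, a i • x i‖ ≤ ‖∑ i ∈ s, a i • x i‖)
    (a : ℕ → ℝ) (m : ℕ → ℕ) (hm : StrictMono m) (s F : Finset ℕ) (hF : F ⊆ s) :
    ‖∑ i ∈ F, a i • x (m i)‖ ≤ ‖∑ i ∈ s, a i • x (m i)‖ := by
  classical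
  set b : ℕ → ℝ := fun n => a (Function.invFun m n) with hb
  have hbm : ∀ i, b (m i) = a i := fun i => by
    simp [hb, Function.leftInverse_invFun hm.injective i]
  have h1 : ∀ (T : Finset ℕ), ∑ i ∈ T, a i • x (m i) = ∑ n ∈ T.image m, b n • x n := by
    intro T
    rw [Finset.sum_image (fun i _ j _ h => hm.injective h)]
    exact Finset.sum_congr rfl fun i _ => by rw [hbm]
  rw [h1 F, h1 s]
  exact hsupp b (s.image m) (F.image m) (Finset.image_subset_image hF)

lemma aux_reindex (x : ℕ → X) (a : ℕ → ℝ) (f : ℕ → ℕ) (r c : ℕ) (hc : c < 2) :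
    ∑ j ∈ Finset.range r, (if 2*j+c < r then a (2*j+c) else 0) • x (f (2*j+c)) =
      ∑ i ∈ (Finset.range r).filter (fun i => i % 2 = c), a i • x (f i) := by
  classical
  rw [show (∑ j ∈ Finset.range r, (if 2*j+c < r then a (2*j+c) else 0) • x (f (2*j+c)))
      = ∑ j ∈ Finset.range r, (if 2*j+c < r then a (2*j+c) • x (f (2*j+c)) else 0) from
      Finset.sum_congr rfl (fun j _ => by split <;> simp),
    ← Finset.sum_filter]
  refine Finset.sum_nbij' (fun j => 2*j+c) (fun i => i / 2) ?_ ?_ ?_ ?_ ?_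
  all_goals intro j hj
  all_goals simp_all [Finset.mem_filter, Finset.mem_range]
  all_goals omega

/-- **Theorem.** If `x` is suppression 1-unconditional and `C`-right dominant then for
interleaved indices `k 0 < m 0 ≤ k 1 < m 1 ≤ k 2 < m 2 ≤ ⋯` one has
`‖∑ a i • x (k i)‖ ≤ 2C‖∑ a i • x (m i)‖`. -/
theorem rightDominant_interleaved
    (X : Type) [NormedAddCommGroup X] [NormedSpace ℝ X]
    (x : ℕ → X) (hsupp : SuppressionOneUnconditional x)
    (C : ℝ) (hC : 0 < C) (hrd : RightDominant C x)
    (r : ℕ) (k m : ℕ → ℕ) (a : ℕ → ℝ) (hkm : ∀ i, k i < m i) (hmk : ∀ i, m i ≤ k (i + 1)) :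
    ‖∑ i ∈ Finset.range r, a i • x (k i)‖ ≤
      2 * C * ‖∑ i ∈ Finset.range r, a i • x (m i)‖ := by
  classical
  have hmono_m : StrictMono m :=
    strictMono_nat_of_lt_succ fun i => lt_of_le_of_lt (hmk i) (hkm (i + 1))
  have key : ∀ c : ℕ, c < 2 →
      ‖∑ i ∈ (Finset.range r).filter (fun i => i % 2 = c), a i • x (k i)‖ ≤
        C * ‖∑ i ∈ Finset.range r, a i • x (m i)‖ := by
    intro c hc
    set a' : ℕ → ℝ := fun j => if 2*j+c < r then a (2*j+c) else 0 with ha'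
    have h1 := hrd r (fun j => k (2*j+c)) (fun j => m (2*j+c)) a'
      (fun j => (hkm _).le)
      (fun j => by
        calc m (2*j+c) ≤ k (2*j+c+1) := hmk _
          _ < m (2*j+c+1) := hkm _
          _ ≤ k (2*(j+1)+c) := by
              have := hmk (2*j+c+1)
              have h2 : 2*j+c+1+1 = 2*(j+1)+c := by ring
              rwa [h2] at this
      )
    rw [aux_reindex x a k r c hc, aux_reindex x a m r c hc] at h1
    refine h1.trans ?_
    gcongr
    exact aux_supp x hsupp a m hmono_m _ _ (Finset.filter_subset _ _)
  have hsplit : ∑ i ∈ Finset.range r, a i • x (k i) =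
      (∑ i ∈ (Finset.range r).filter (fun i => i % 2 = 0), a i • x (k i)) +
      ∑ i ∈ (Finset.range r).filter (fun i => i % 2 = 1), a i • x (k i) := by
    rw [← Finset.sum_filter_add_sum_filter_not (Finset.range r) (fun i => i % 2 = 0)]
    congr 1
    apply Finset.sum_congr _ (fun _ _ => rfl)
    apply Finset.filter_congr
    intro i _
    omega
  rw [hsplit]
  calc ‖_ + _‖ ≤ _ + _ := norm_add_le _ _
    _ ≤ C * ‖∑ i ∈ Finset.range r, a i • x (m i)‖ +
        C * ‖∑ i ∈ Finset.range r, a i • x (m i)‖ :=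
        add_le_add (key 0 (by norm_num)) (key 1 (by norm_num))
    _ = 2 * C * ‖∑ i ∈ Finset.range r, a i • x (m i)‖ := by ring
end

section
/- Let (x_i) be a normalized 1-unconditional sequence in a real Banach space X that is C-right dominant, and let V be the associated variation norm. Then for every finitely supported a : ℕ → ℝ: (1) if ã denotes the finitely supported sequence with ã_{2i} = a_i and ã_{2i−1} = 0 for all i, then ‖Σ_i a_i x_{2i}‖ ≤ V(ã) ≤ (1 + 2C)·‖Σ_i a_i x_{2i}‖; and (2) if â denotes the finitely supported sequence with â_{2i} = a_{2i} − a_{2i+1} and â_{2i−1} = 0 for all i, then V(â) ≤ (1 + 2C)·V(a). -/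
open scoped BigOperators

variable {X : Type*} [NormedAddCommGroup X] [NormedSpace ℝ X]

lemma zero_pad (x : ℕ → X) (hu : OneUnconditional x) (t : Finset ℕ) (a : ℕ → ℝ)
    (P : ℕ → Prop) [DecidablePred P] :
    ‖∑ i ∈ t, (if P i then a i else 0) • x i‖ ≤ ‖∑ i ∈ t, a i • x i‖ := by
  set ε : ℕ → ℝ := fun i => if P i then 1 else -1 with hεdef
  have hε : ∀ i, ε i = 1 ∨ ε i = -1 := fun i => by
    by_cases h : P i <;> simp [hεdef, h]
  have key := hu t a ε hε
  have h2 : ∑ i ∈ t, a i • x i + ∑ i ∈ t, (ε i * a i) • x i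
      = (2:ℝ) • ∑ i ∈ t, (if P i then a i else 0) • x i := by
    rw [← Finset.sum_add_distrib, Finset.smul_sum]
    refine Finset.sum_congr rfl fun i _ => ?_
    by_cases h : P i
    · simp only [hεdef, if_pos h, one_mul, smul_smul, ← add_smul]
      ring_nf
    · simp [hεdef, if_neg h, ← add_smul]
  have : ‖∑ i ∈ t, (if P i then a i else 0) • x i‖
      = (2:ℝ)⁻¹ * ‖∑ i ∈ t, a i • x i + ∑ i ∈ t, (ε i * a i) • x i‖ := by
    rw [h2, norm_smul]
    simp
  rw [this]
  calc (2:ℝ)⁻¹ * ‖∑ i ∈ t, a i • x i + ∑ i ∈ t, (ε i * a i) • x i‖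
      ≤ (2:ℝ)⁻¹ * (‖∑ i ∈ t, a i • x i‖ + ‖∑ i ∈ t, (ε i * a i) • x i‖) := by
        gcongr; exact norm_add_le _ _
    _ = ‖∑ i ∈ t, a i • x i‖ := by rw [key]; ring

lemma subset_norm_le (x : ℕ → X) (hu : OneUnconditional x) (b : ℕ → ℝ) (s t : Finset ℕ)
    (h : ∀ i ∈ s, b i ≠ 0 → i ∈ t) :
    ‖∑ i ∈ s, b i • x i‖ ≤ ‖∑ i ∈ t, b i • x i‖ := by
  classical
  have h1 : ∑ i ∈ s, b i • x i = ∑ i ∈ t, (if i ∈ s then b i else 0) • x i := by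
    have e1 : ∑ i ∈ t, (if i ∈ s then b i else 0) • x i
        = ∑ i ∈ t.filter (· ∈ s), b i • x i := by
      rw [Finset.sum_filter]
      refine Finset.sum_congr rfl fun i _ => ?_
      by_cases hi : i ∈ s <;> simp [hi]
    rw [e1]
    refine (Finset.sum_subset (fun i hi => (Finset.mem_filter.mp hi).2) ?_).symm
    intro i hi hni
    by_cases hb : b i = 0
    · simp [hb]
    · exact absurd (Finset.mem_filter.mpr ⟨h i hi hb, hi⟩) hni
  rw [h1]
  exact zero_pad x hu t b (· ∈ s)

lemma sum_range_even_odd {M : Type*} [AddCommMonoid M] (g : ℕ → M) (r : ℕ) :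
    ∑ n ∈ Finset.range r, g n =
      ∑ j ∈ Finset.range ((r+1)/2), g (2*j) + ∑ j ∈ Finset.range (r/2), g (2*j+1) := by
  induction r with
  | zero => simp
  | succ r ih =>
    rw [Finset.sum_range_succ, ih]
    rcases Nat.even_or_odd r with ⟨j, hj⟩ | ⟨j, hj⟩
    · have h1 : (r+1+1)/2 = (r+1)/2 + 1 := by omega
      have h2 : (r+1)/2 = r/2 := by omega
      have h3 : r = 2 * ((r+1)/2) := by omega
      rw [h1, Finset.sum_range_succ, ← h3, h2]
      abel
    · have h1 : (r+1+1)/2 = (r+1)/2 := by omega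
      have h2 : (r+1)/2 = r/2 + 1 := by omega
      have h3 : r = 2 * (r/2) + 1 := by omega
      rw [h1, h2, Finset.sum_range_succ (fun j => g (2*j+1)) (r/2), ← h3]
      abel

lemma mem_varSet_of (x : ℕ → X) (a : ℕ → ℝ) (c : ℕ) (f : ℕ → ℕ)
    (hf : ∀ t, t + 1 < c → f t < f (t+1)) :
    ‖∑ t ∈ Finset.range c, (a (f t) - a (f t + 1)) • x (f t)‖ ∈ varSet x a := by
  classical
  set M := ((Finset.range c).sup f) + 1 with hM
  set k' : ℕ → ℕ := fun t => if t < c then f t else M + t with hk'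
  have hmono : ∀ t, k' t < k' (t+1) := by
    intro t
    simp only [hk']
    by_cases h1 : t + 1 < c
    · rw [if_pos (by omega), if_pos h1]; exact hf t h1
    · rw [if_neg h1]
      by_cases h2 : t < c
      · rw [if_pos h2]
        have : f t ≤ (Finset.range c).sup f := Finset.le_sup (Finset.mem_range.mpr h2)
        omega
      · rw [if_neg h2]; omega
  refine ⟨c, k', fun t => k' t + 1, fun t => lt_add_one _, fun t => hmono t, ?_⟩
  congr 1
  refine Finset.sum_congr rfl fun t ht => ?_
  have hkt : k' t = f t := by simp only [hk']; rw [if_pos (Finset.mem_range.mp ht)]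
  show (a (f t) - a (f t + 1)) • x (f t) = (a (k' t) - a (k' t + 1)) • x (k' t)
  rw [hkt]

lemma abs_sum_le_total (a : ℕ → ℝ) (ha : (Function.support a).Finite)
    (g : ℕ → ℕ) (hg : StrictMono g) (r : ℕ) :
    ∑ n ∈ Finset.range r, |a (g n)| ≤ ∑ i ∈ ha.toFinset, |a i| := by
  classical
  rw [← Finset.sum_image (g := g) (f := fun i => |a i|)
    (fun i _ j _ h => hg.injective h)]
  set u := (Finset.range r).image g
  have e1 : ∑ i ∈ u, |a i| = ∑ i ∈ u ∩ ha.toFinset, |a i| := by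
    refine (Finset.sum_subset Finset.inter_subset_left ?_).symm
    intro i hi hni
    have : i ∉ ha.toFinset := fun h => hni (Finset.mem_inter.mpr ⟨hi, h⟩)
    simp only [Set.Finite.mem_toFinset, Function.mem_support, not_not] at this
    simp [this]
  rw [e1]
  exact Finset.sum_le_sum_of_subset_of_nonneg Finset.inter_subset_right
    (fun i _ _ => abs_nonneg _)

lemma varSet_bddAbove (x : ℕ → X) (hnorm : ∀ i, ‖x i‖ = 1) (a : ℕ → ℝ)
    (ha : (Function.support a).Finite) : BddAbove (varSet x a) := by
  refine ⟨2 * ∑ i ∈ ha.toFinset, |a i|, ?_⟩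
  rintro v ⟨r, k, m, hkm, hmk, rfl⟩
  have hkmono : StrictMono k := strictMono_nat_of_lt_succ fun n =>
    lt_of_lt_of_le (hkm n) (hmk n)
  have hmmono : StrictMono m := strictMono_nat_of_lt_succ fun n =>
    lt_of_le_of_lt (hmk n) (hkm (n+1))
  calc ‖∑ n ∈ Finset.range r, (a (k n) - a (m n)) • x (k n)‖
      ≤ ∑ n ∈ Finset.range r, ‖(a (k n) - a (m n)) • x (k n)‖ := norm_sum_le _ _
    _ = ∑ n ∈ Finset.range r, |a (k n) - a (m n)| := by
        refine Finset.sum_congr rfl fun n _ => ?_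
        rw [norm_smul, hnorm, mul_one, Real.norm_eq_abs]
    _ ≤ ∑ n ∈ Finset.range r, (|a (k n)| + |a (m n)|) :=
        Finset.sum_le_sum fun n _ => abs_sub _ _
    _ = ∑ n ∈ Finset.range r, |a (k n)| + ∑ n ∈ Finset.range r, |a (m n)| :=
        Finset.sum_add_distrib
    _ ≤ ∑ i ∈ ha.toFinset, |a i| + ∑ i ∈ ha.toFinset, |a i| :=
        add_le_add (abs_sum_le_total a ha k hkmono r) (abs_sum_le_total a ha m hmmono r)
    _ = 2 * ∑ i ∈ ha.toFinset, |a i| := by ring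

lemma zero_mem_varSet (x : ℕ → X) (a : ℕ → ℝ) : (0:ℝ) ∈ varSet x a :=
  ⟨0, fun n => 2*n, fun n => 2*n+1, fun n => lt_add_one _,
    fun n => by show 2*n+1 ≤ 2*(n+1); omega, by simp⟩
lemma rd_le (x : ℕ → X) (C : ℝ) (hrd : RightDominant C x)
    (r : ℕ) (k m : ℕ → ℕ) (b : ℕ → ℝ) (hkm : ∀ n, k n < m n) (hmk : ∀ n, m n ≤ k (n+1)) :
    ‖∑ n ∈ Finset.range r, b n • x (k n)‖ ≤
      C * ‖∑ j ∈ Finset.range ((r+1)/2), b (2*j) • x (m (2*j))‖ +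
      C * ‖∑ j ∈ Finset.range (r/2), b (2*j+1) • x (m (2*j+1))‖ := by
  rw [sum_range_even_odd (fun n => b n • x (k n)) r]
  refine le_trans (norm_add_le _ _) (add_le_add ?_ ?_)
  · refine hrd ((r+1)/2) (fun j => k (2*j)) (fun j => m (2*j)) (fun j => b (2*j))
      (fun j => (hkm _).le) ?_
    intro j
    show m (2*j) < k (2*(j+1))
    have h1 := hmk (2*j)
    have h2 := hkm (2*j+1)
    have h3 := hmk (2*j+1)
    have he : 2*(j+1) = 2*j+1+1 := by ring
    rw [he]
    omega
  · refine hrd (r/2) (fun j => k (2*j+1)) (fun j => m (2*j+1)) (fun j => b (2*j+1))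
      (fun j => (hkm _).le) ?_
    intro j
    show m (2*j+1) < k (2*(j+1)+1)
    have h1 := hmk (2*j+1)
    have h2 := hkm (2*j+1+1)
    have h3 := hmk (2*j+1+1)
    have he : 2*(j+1)+1 = 2*j+1+1+1 := by ring
    rw [he]
    omega

lemma le_full (x : ℕ → X) (hu : OneUnconditional x) (a : ℕ → ℝ)
    (ha : (Function.support a).Finite) (atld : ℕ → ℝ)
    (h0 : ∀ i, atld (2 * i) = a i) (h1 : ∀ i, atld (2 * i + 1) = 0)
    (g : ℕ → ℕ) (hg : StrictMono g) (r : ℕ) :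
    ‖∑ j ∈ Finset.range r, atld (g j) • x (g j)‖ ≤ ‖∑ᶠ i, a i • x (2 * i)‖ := by
  classical
  have hfin : ∑ᶠ i, a i • x (2 * i) = ∑ p ∈ ha.toFinset, a p • x (2 * p) := by
    apply finsum_eq_finset_sum_of_support_subset
    intro i hi
    simp only [Function.mem_support] at hi
    simp only [Set.Finite.coe_toFinset, Function.mem_support]
    intro h; apply hi; rw [h, zero_smul]
  have hT : ∑ p ∈ ha.toFinset, a p • x (2 * p)
      = ∑ i ∈ ha.toFinset.image (fun p => 2 * p), atld i • x i := by
    rw [Finset.sum_image (fun i _ j _ h => by omega)]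
    exact Finset.sum_congr rfl fun p _ => by rw [h0]
  have hL : ∑ j ∈ Finset.range r, atld (g j) • x (g j)
      = ∑ i ∈ (Finset.range r).image g, atld i • x i :=
    (Finset.sum_image (f := fun i => atld i • x i) (g := g)
      (fun i _ j _ h => hg.injective h)).symm
  rw [hfin, hT, hL]
  apply subset_norm_le x hu atld
  intro i _ hne
  rcases Nat.even_or_odd i with ⟨p, hp⟩ | ⟨p, hp⟩
  · have hip : i = 2 * p := by omega
    rw [hip, h0] at hne
    exact Finset.mem_image.mpr ⟨p, ha.mem_toFinset.mpr hne, hip.symm⟩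
  · exfalso; apply hne
    have hip : i = 2 * p + 1 := by omega
    rw [hip, h1]

lemma le_varNorm_aux (x : ℕ → X) (hnorm : ∀ i, ‖x i‖ = 1) (a : ℕ → ℝ)
    (ha : (Function.support a).Finite) (ahat : ℕ → ℝ)
    (h0 : ∀ i, ahat (2 * i) = a (2 * i) - a (2 * i + 1))
    (h1 : ∀ i, ahat (2 * i + 1) = 0)
    (g : ℕ → ℕ) (hg : StrictMono g) (r : ℕ) :
    ‖∑ j ∈ Finset.range r, ahat (g j) • x (g j)‖ ≤ varNorm x a := by
  classical
  have hodd : ∀ i, ¬ Even i → ahat i = 0 := by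
    intro i hi
    rcases Nat.even_or_odd i with h | ⟨p, hp⟩
    · exact absurd h hi
    · have hip : i = 2 * p + 1 := by omega
      rw [hip, h1]
  have heven : ∀ i, Even i → ahat i = a i - a (i + 1) := by
    intro i ⟨p, hp⟩
    have hip : i = 2 * p := by omega
    rw [hip, h0]
  set u := (Finset.range r).filter (fun j => Even (g j)) with hudef
  have hsum : ∑ j ∈ Finset.range r, ahat (g j) • x (g j) = ∑ j ∈ u, ahat (g j) • x (g j) := by
    refine (Finset.sum_subset (Finset.filter_subset _ _) ?_).symm
    intro j hj hnj
    have hne : ¬ Even (g j) := fun h => hnj (Finset.mem_filter.mpr ⟨hj, h⟩)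
    rw [hodd _ hne, zero_smul]
  set c := u.card with hc
  set e := u.orderEmbOfFin rfl with he
  set f : ℕ → ℕ := fun t => if h : t < c then g (e ⟨t, h⟩) else 0 with hf
  have himg : u = Finset.image (fun t : Fin c => e t) Finset.univ := by
    apply Finset.coe_injective
    rw [Finset.coe_image, Finset.coe_univ, Set.image_univ, he, Finset.range_orderEmbOfFin]
  have hsum2 : ∑ j ∈ u, ahat (g j) • x (g j) = ∑ t ∈ Finset.range c, ahat (f t) • x (f t) := by
    rw [himg, Finset.sum_image (fun i _ j _ h => e.injective h),
      ← Fin.sum_univ_eq_sum_range (fun t => ahat (f t) • x (f t)) c]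
    refine Finset.sum_congr rfl fun t _ => ?_
    have hft : f t.val = g (e t) := by
      simp only [hf]
      rw [dif_pos t.isLt, Fin.eta]
    rw [hft]
  have hmonof : ∀ t, t + 1 < c → f t < f (t + 1) := by
    intro t h
    simp only [hf]
    rw [dif_pos (by omega : t < c), dif_pos h]
    exact hg (e.strictMono (Fin.mk_lt_mk.mpr (by omega)))
  have hcoef : ∀ t ∈ Finset.range c, ahat (f t) • x (f t) = (a (f t) - a (f t + 1)) • x (f t) := by
    intro t ht
    have htc := Finset.mem_range.mp ht
    have hev : Even (f t) := by
      have hft : f t = g (e ⟨t, htc⟩) := by simp only [hf]; rw [dif_pos htc]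
      have hmem : (e ⟨t, htc⟩) ∈ u := Finset.orderEmbOfFin_mem u rfl _
      rw [hft]
      exact (Finset.mem_filter.mp hmem).2
    rw [heven _ hev]
  rw [hsum, hsum2, Finset.sum_congr rfl hcoef]
  exact le_csSup (varSet_bddAbove x hnorm a ha) (mem_varSet_of x a c f hmonof)

/-- **Theorem.** Let `x` be a normalized 1-unconditional `C`-right dominant sequence and
`V` the associated variation norm.  (1) If `ã` is supported on the even indices with
`ã (2i) = a i`, then `‖∑ a i • x (2i)‖ ≤ V(ã) ≤ (1 + 2C)·‖∑ a i • x (2i)‖`.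
(2) If `â` is supported on the even indices with `â (2i) = a (2i) - a (2i+1)`, then
`V(â) ≤ (1 + 2C)·V(a)`. -/
theorem varNorm_even_part_estimates
    (X : Type) [NormedAddCommGroup X] [NormedSpace ℝ X]
    (x : ℕ → X) (hnorm : ∀ i, ‖x i‖ = 1) (hu : OneUnconditional x)
    (C : ℝ) (hC : 0 < C) (hrd : RightDominant C x)
    (a : ℕ → ℝ) (ha : (Function.support a).Finite) :
    (∀ atld : ℕ → ℝ, (∀ i, atld (2 * i) = a i) → (∀ i, atld (2 * i + 1) = 0) →
      ‖∑ᶠ i, a i • x (2 * i)‖ ≤ varNorm x atld ∧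
      varNorm x atld ≤ (1 + 2 * C) * ‖∑ᶠ i, a i • x (2 * i)‖) ∧
    (∀ ahat : ℕ → ℝ, (∀ i, ahat (2 * i) = a (2 * i) - a (2 * i + 1)) →
      (∀ i, ahat (2 * i + 1) = 0) →
      varNorm x ahat ≤ (1 + 2 * C) * varNorm x a) := by
  classical
  constructor
  · intro atld h0 h1
    have hatld_fin : (Function.support atld).Finite := by
      apply Set.Finite.subset (ha.image (fun p => 2 * p))
      intro i hi
      simp only [Function.mem_support] at hi
      rcases Nat.even_or_odd i with ⟨p, hp⟩ | ⟨p, hp⟩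
      · have hip : i = 2 * p := by omega
        rw [hip, h0] at hi
        exact ⟨p, hi, hip.symm⟩
      · exfalso; apply hi
        have hip : i = 2 * p + 1 := by omega
        rw [hip, h1]
    have hbdd := varSet_bddAbove x hnorm atld hatld_fin
    constructor
    · -- lower bound
      obtain ⟨N, hN⟩ : ∃ N, ∀ i ∈ ha.toFinset, i < N :=
        ⟨(ha.toFinset.sup id) + 1, fun i hi => Nat.lt_succ_of_le (Finset.le_sup (f := id) hi)⟩
      have hfin : ∑ᶠ i, a i • x (2 * i) = ∑ p ∈ ha.toFinset, a p • x (2 * p) := by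
        apply finsum_eq_finset_sum_of_support_subset
        intro i hi
        simp only [Function.mem_support] at hi
        simp only [Set.Finite.coe_toFinset, Function.mem_support]
        intro h; apply hi; rw [h, zero_smul]
      have hext : ∑ p ∈ ha.toFinset, a p • x (2 * p)
          = ∑ n ∈ Finset.range N, a n • x (2 * n) := by
        apply Finset.sum_subset (fun i hi => Finset.mem_range.mpr (hN i hi))
        intro i _ hni
        have hz : a i = 0 := by
          by_contra h; exact hni (ha.mem_toFinset.mpr h)
        rw [hz, zero_smul]
      have hmem : ‖∑ n ∈ Finset.range N, a n • x (2 * n)‖ ∈ varSet x atld := by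
        refine ⟨N, fun n => 2 * n, fun n => 2 * n + 1, fun n => lt_add_one _,
          fun n => by show 2 * n + 1 ≤ 2 * (n + 1); omega, ?_⟩
        congr 1
        refine Finset.sum_congr rfl fun n _ => ?_
        show a n • x (2 * n) = (atld (2 * n) - atld (2 * n + 1)) • x (2 * n)
        rw [h0, h1, sub_zero]
      rw [hfin, hext]
      exact le_csSup hbdd hmem
    · -- upper bound
      refine csSup_le ⟨0, zero_mem_varSet x atld⟩ ?_
      rintro v ⟨r, k, m, hkm, hmk, rfl⟩
      have hkmono : StrictMono k := strictMono_nat_of_lt_succ fun n =>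
        lt_of_lt_of_le (hkm n) (hmk n)
      have hmmono : StrictMono m := strictMono_nat_of_lt_succ fun n =>
        lt_of_le_of_lt (hmk n) (hkm (n + 1))
      have hsplit : ∑ n ∈ Finset.range r, (atld (k n) - atld (m n)) • x (k n)
          = ∑ n ∈ Finset.range r, atld (k n) • x (k n)
            - ∑ n ∈ Finset.range r, atld (m n) • x (k n) := by
        rw [← Finset.sum_sub_distrib]
        exact Finset.sum_congr rfl fun n _ => by rw [sub_smul]
      have e1 : ‖∑ n ∈ Finset.range r, atld (k n) • x (k n)‖ ≤ ‖∑ᶠ i, a i • x (2 * i)‖ :=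
        le_full x hu a ha atld h0 h1 k hkmono r
      have e2 := rd_le x C hrd r k m (fun n => atld (m n)) hkm hmk
      have e3 : ‖∑ j ∈ Finset.range ((r+1)/2), atld (m (2*j)) • x (m (2*j))‖
          ≤ ‖∑ᶠ i, a i • x (2 * i)‖ :=
        le_full x hu a ha atld h0 h1 (fun j => m (2*j))
          (strictMono_nat_of_lt_succ fun j => hmmono (show 2*j < 2*(j+1) by omega)) _
      have e4 : ‖∑ j ∈ Finset.range (r/2), atld (m (2*j+1)) • x (m (2*j+1))‖
          ≤ ‖∑ᶠ i, a i • x (2 * i)‖ :=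
        le_full x hu a ha atld h0 h1 (fun j => m (2*j+1))
          (strictMono_nat_of_lt_succ fun j => hmmono (show 2*j+1 < 2*(j+1)+1 by omega)) _
      calc ‖∑ n ∈ Finset.range r, (atld (k n) - atld (m n)) • x (k n)‖
          ≤ ‖∑ n ∈ Finset.range r, atld (k n) • x (k n)‖
            + ‖∑ n ∈ Finset.range r, atld (m n) • x (k n)‖ := by
            rw [hsplit]; exact norm_sub_le _ _
        _ ≤ ‖∑ᶠ i, a i • x (2 * i)‖
            + (C * ‖∑ j ∈ Finset.range ((r+1)/2), atld (m (2*j)) • x (m (2*j))‖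
              + C * ‖∑ j ∈ Finset.range (r/2), atld (m (2*j+1)) • x (m (2*j+1))‖) :=
            add_le_add e1 e2
        _ ≤ ‖∑ᶠ i, a i • x (2 * i)‖
            + (C * ‖∑ᶠ i, a i • x (2 * i)‖ + C * ‖∑ᶠ i, a i • x (2 * i)‖) := by
            gcongr
        _ = (1 + 2 * C) * ‖∑ᶠ i, a i • x (2 * i)‖ := by ring
  · intro ahat h0 h1
    refine csSup_le ⟨0, zero_mem_varSet x ahat⟩ ?_
    rintro v ⟨r, k, m, hkm, hmk, rfl⟩
    have hkmono : StrictMono k := strictMono_nat_of_lt_succ fun n =>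
      lt_of_lt_of_le (hkm n) (hmk n)
    have hmmono : StrictMono m := strictMono_nat_of_lt_succ fun n =>
      lt_of_le_of_lt (hmk n) (hkm (n + 1))
    have hsplit : ∑ n ∈ Finset.range r, (ahat (k n) - ahat (m n)) • x (k n)
        = ∑ n ∈ Finset.range r, ahat (k n) • x (k n)
          - ∑ n ∈ Finset.range r, ahat (m n) • x (k n) := by
      rw [← Finset.sum_sub_distrib]
      exact Finset.sum_congr rfl fun n _ => by rw [sub_smul]
    have e1 : ‖∑ n ∈ Finset.range r, ahat (k n) • x (k n)‖ ≤ varNorm x a :=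
      le_varNorm_aux x hnorm a ha ahat h0 h1 k hkmono r
    have e2 := rd_le x C hrd r k m (fun n => ahat (m n)) hkm hmk
    have e3 : ‖∑ j ∈ Finset.range ((r+1)/2), ahat (m (2*j)) • x (m (2*j))‖ ≤ varNorm x a :=
      le_varNorm_aux x hnorm a ha ahat h0 h1 (fun j => m (2*j))
        (strictMono_nat_of_lt_succ fun j => hmmono (show 2*j < 2*(j+1) by omega)) _
    have e4 : ‖∑ j ∈ Finset.range (r/2), ahat (m (2*j+1)) • x (m (2*j+1))‖ ≤ varNorm x a :=
      le_varNorm_aux x hnorm a ha ahat h0 h1 (fun j => m (2*j+1))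
        (strictMono_nat_of_lt_succ fun j => hmmono (show 2*j+1 < 2*(j+1)+1 by omega)) _
    have hV : 0 ≤ varNorm x a :=
      le_csSup (varSet_bddAbove x hnorm a ha) (zero_mem_varSet x a)
    calc ‖∑ n ∈ Finset.range r, (ahat (k n) - ahat (m n)) • x (k n)‖
        ≤ ‖∑ n ∈ Finset.range r, ahat (k n) • x (k n)‖
          + ‖∑ n ∈ Finset.range r, ahat (m n) • x (k n)‖ := by
          rw [hsplit]; exact norm_sub_le _ _
      _ ≤ varNorm x a
          + (C * ‖∑ j ∈ Finset.range ((r+1)/2), ahat (m (2*j)) • x (m (2*j))‖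
            + C * ‖∑ j ∈ Finset.range (r/2), ahat (m (2*j+1)) • x (m (2*j+1))‖) :=
          add_le_add e1 e2
      _ ≤ varNorm x a + (C * varNorm x a + C * varNorm x a) := by gcongr
      _ = (1 + 2 * C) * varNorm x a := by ring
end
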